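/- arXiv:1503.01575 — 3 statements merged into one kernel-verified Lean document; each statement's English description precedes it below -/
import Mathlib

section
/- Let H be an n×n Hermitian matrix, a a real number with a > 0, J the n×n all-ones matrix, and M = H + aJ. Let τ_1 < ⋯ < τ_r be the distinct main eigenvalues of H and μ_1 < ⋯ < μ_r the distinct main eigenvalues of M (there are equally many). Then the strict interlacing τ_1 < μ_1 < τ_2 < μ_2 < ⋯ < τ_r < μ_r holds. -/
open Matrix
open scoped Classical

noncomputable def eigSp {V : Type*} [Fintype V] [DecidableEq V]
    (H : Matrix V V ℂ) (μ : ℝ) : Submodule ℂ (EuclideanSpace ℂ V) :=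
  LinearMap.ker (Matrix.toEuclideanLin H - (μ : ℂ) • LinearMap.id)

noncomputable def mainAngle {V : Type*} [Fintype V] [DecidableEq V]
    (H : Matrix V V ℂ) (μ : ℝ) : ℝ :=
  (1 / Real.sqrt (Fintype.card V)) *
    ‖(Submodule.orthogonalProjectionOnto (eigSp H μ) (WithLp.toLp 2 (fun _ => 1)) : EuclideanSpace ℂ V)‖

noncomputable def eigMult {V : Type*} [Fintype V] [DecidableEq V]
    (H : Matrix V V ℂ) (μ : ℝ) : ℕ :=
  Module.finrank ℂ (eigSp H μ)

/-- `A` is the adjacency matrix of a tournament: a (0,1)-matrix with `A + Aᵀ = J - I`. -/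
def IsTournament {V : Type*} [Fintype V] [DecidableEq V] (A : Matrix V V ℂ) : Prop :=
  (∀ i j, A i j = 0 ∨ A i j = 1) ∧
    A + Aᵀ = Matrix.of (fun _ _ => (1 : ℂ)) - 1

/-- `φ` is a representation of the tournament with adjacency matrix `A` in `Ω(d)`,
with angle `α` (Im α > 0). -/
def IsRepresentation {n d : ℕ} (A : Matrix (Fin n) (Fin n) ℂ) (α : ℂ)
    (φ : Fin n → EuclideanSpace ℂ (Fin d)) : Prop :=
  0 < α.im ∧ (∀ x, ‖φ x‖ = 1) ∧
    ∀ x y : Fin n, x ≠ y →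
      (A x y = 1 → (inner ℂ (φ x) (φ y) : ℂ) = α) ∧
      (A y x = 1 → (inner ℂ (φ x) (φ y) : ℂ) = (starRingEnd ℂ) α)

def Representable {n : ℕ} (A : Matrix (Fin n) (Fin n) ℂ) (d : ℕ) : Prop :=
  ∃ (α : ℂ) (φ : Fin n → EuclideanSpace ℂ (Fin d)), IsRepresentation A α φ

noncomputable def RepDim {n : ℕ} (A : Matrix (Fin n) (Fin n) ℂ) : ℕ :=
  sInf {d | Representable A d}

/-- doubly regular tournament -/
def IsDoublyRegular {V : Type*} [Fintype V] [DecidableEq V] (A : Matrix V V ℂ) : Prop :=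
  IsTournament A ∧
    A *ᵥ (fun _ => 1) = (fun _ => ((Fintype.card V : ℂ) - 1) / 2) ∧
    A * Aᵀ = (((Fintype.card V : ℂ) + 1) / 4) • 1 +
      (((Fintype.card V : ℂ) - 3) / 4) • Matrix.of (fun _ _ => (1 : ℂ))

/-- skew Hadamard matrix -/
def IsSkewHadamard {V : Type*} [Fintype V] [DecidableEq V] (H : Matrix V V ℂ) : Prop :=
  (∀ i j, H i j = 1 ∨ H i j = -1) ∧
    H + Hᵀ = (2 : ℂ) • 1 ∧ H * Hᵀ = (Fintype.card V : ℂ) • 1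

/-- 2-code -/
def IsTwoCode {d : ℕ} (X : Finset (EuclideanSpace ℂ (Fin d))) (α : ℂ) : Prop :=
  α.im ≠ 0 ∧ (∀ x ∈ X, ‖x‖ = 1) ∧
    {z : ℂ | ∃ x ∈ X, ∃ y ∈ X, x ≠ y ∧ (inner ℂ x y : ℂ) = z} = {α, (starRingEnd ℂ) α}

/-- adjacency matrix of a 2-code -/
noncomputable def codeAdj {d : ℕ} (X : Finset (EuclideanSpace ℂ (Fin d))) (α : ℂ) :
    Matrix {x // x ∈ X} {x // x ∈ X} ℂ :=
  Matrix.of fun x y =>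
    if (x : EuclideanSpace ℂ (Fin d)) ≠ (y : EuclideanSpace ℂ (Fin d)) ∧
        (inner ℂ (x : EuclideanSpace ℂ (Fin d)) (y : EuclideanSpace ℂ (Fin d)) : ℂ) = α
    then 1 else 0

/-!
Write the all-ones vector as `𝟙 = ∑ wᵢ`, where `wᵢ` is its projection onto the `τᵢ`-eigenspace
of `H`; the non-main eigenspaces do not contribute. If `z ≠ 0` is the projection of `𝟙` onto the
`μ`-eigenspace of `M = H + a 𝟙𝟙*`, pairing `M z = μ z` with `wᵢ` gives
`(μ - τᵢ) ⟪wᵢ, z⟫ = a ⟪𝟙, z⟫ ‖wᵢ‖²`, and summing over `i` yields the secular equation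
`∑ᵢ a ‖wᵢ‖² / (μ - τᵢ) = 1`. Its left side is negative below `τ₁` and strictly decreasing between
consecutive poles, so each of the `r` intervals `(τᵢ, τᵢ₊₁)` (with `τᵣ₊₁ = ∞`) contains at most
one of the `r` roots `μⱼ`, which therefore occupy them in order.
-/

open Module.End
open scoped InnerProductSpace

section InnerProductSpace

variable {𝕜 E : Type*} [RCLike 𝕜] [NormedAddCommGroup E] [InnerProductSpace 𝕜 E]

theorem Submodule.inner_starProjection_self (K : Submodule 𝕜 E) [K.HasOrthogonalProjection]
    (v : E) : ⟪K.starProjection v, v⟫_𝕜 = (‖K.starProjection v‖ ^ 2 : ℝ) := by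
  conv_lhs => rw [← K.starProjection_eq_self_iff.mpr (K.starProjection_apply_mem v),
    K.inner_starProjection_left_eq_right]
  rw [inner_self_eq_norm_sq_to_K]
  norm_cast

namespace LinearMap.IsSymmetric

variable {T : E →ₗ[𝕜] E}

theorem eq_re_of_eigenspace_ne_bot (hT : T.IsSymmetric) {μ : 𝕜} (hμ : eigenspace T μ ≠ ⊥) :
    μ = (RCLike.re μ : 𝕜) :=
  (RCLike.conj_eq_iff_re.mp (hT.conj_eigenvalue_eq_self (hasEigenvalue_iff.mpr hμ))).symm

theorem sub_mul_inner_eq_of_add_rankOne_apply_eq (hT : T.IsSymmetric) {j w z : E} {a τ μ : ℝ}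
    (hw : T w = (τ : 𝕜) • w) (hz : T z + ((a : 𝕜) * ⟪j, z⟫_𝕜) • j = (μ : 𝕜) • z) :
    ((μ : 𝕜) - τ) * ⟪w, z⟫_𝕜 = a * ⟪j, z⟫_𝕜 * ⟪w, j⟫_𝕜 := by
  have h := hT w z
  rw [hw, eq_sub_of_add_eq hz, inner_smul_left, inner_sub_right, inner_smul_right,
    inner_smul_right, RCLike.conj_ofReal] at h
  linear_combination -h

theorem sum_div_sub_eq_one_of_add_rankOne_apply_eq (hT : T.IsSymmetric) {ι : Type*} [Fintype ι]
    {j z : E} {w : ι → E} {τ c : ι → ℝ} {a μ : ℝ} (ha : a ≠ 0)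
    (hw : ∀ i, T (w i) = (τ i : 𝕜) • w i) (hj : ∑ i, w i = j)
    (hc : ∀ i, ⟪w i, j⟫_𝕜 = c i) (hc₀ : ∀ i, c i ≠ 0)
    (hz : T z + ((a : 𝕜) * ⟪j, z⟫_𝕜) • j = (μ : 𝕜) • z) (hjz : ⟪j, z⟫_𝕜 ≠ 0) :
    (∀ i, μ ≠ τ i) ∧ ∑ i, a * c i / (μ - τ i) = 1 := by
  have hkey i := hT.sub_mul_inner_eq_of_add_rankOne_apply_eq (hw i) hz
  have hne : ∀ i, μ ≠ τ i := by
    rintro i rfl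
    simpa [ha, hjz, hc₀, hc] using hkey i
  refine ⟨hne, ?_⟩
  apply_fun ((↑) : ℝ → 𝕜) using RCLike.ofReal_injective
  apply mul_left_cancel₀ hjz
  calc ⟪j, z⟫_𝕜 * ((∑ i, a * c i / (μ - τ i) : ℝ) : 𝕜)
      = ∑ i, ⟪w i, z⟫_𝕜 := by
        push_cast
        rw [Finset.mul_sum]
        refine Finset.sum_congr rfl fun i _ => ?_
        have hsub : (μ : 𝕜) - τ i ≠ 0 := by exact_mod_cast sub_ne_zero.mpr (hne i)
        rw [← mul_div_assoc, div_eq_iff hsub]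
        have h := hkey i
        rw [hc] at h
        linear_combination -h
    _ = ⟪j, z⟫_𝕜 * ((1 : ℝ) : 𝕜) := by rw [← sum_inner, hj, RCLike.ofReal_one, mul_one]

variable [FiniteDimensional 𝕜 E]

theorem starProjection_eigenspace_eq_zero (hT : T.IsSymmetric) {μ ν : 𝕜} (hμν : μ ≠ ν) {x : E}
    (hx : x ∈ eigenspace T ν) : (eigenspace T μ).starProjection x = 0 :=
  (Submodule.starProjection_apply_eq_zero_iff _).mpr
    (hT.orthogonalFamily_eigenspaces.isOrtho hμν.symm hx)

theorem sum_starProjection_eigenspace_eq_self (hT : T.IsSymmetric) {ι : Type*} [Fintype ι]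
    {τ : ι → ℝ} (hτ : Function.Injective τ) {v : E}
    (hv : ∀ t : ℝ, (∀ i, τ i ≠ t) → (eigenspace T (t : 𝕜)).starProjection v = 0) :
    ∑ i, (eigenspace T (τ i : 𝕜)).starProjection v = v := by
  set u := v - ∑ i, (eigenspace T (τ i : 𝕜)).starProjection v
  suffices hu : u ∈ (⨆ μ, eigenspace T μ)ᗮ by
    rw [hT.orthogonalComplement_iSup_eigenspaces_eq_bot, Submodule.mem_bot, sub_eq_zero] at hu
    exact hu.symm
  rw [← Submodule.iInf_orthogonal, Submodule.mem_iInf]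
  intro μ
  rw [← Submodule.starProjection_apply_eq_zero_iff]
  by_cases hbot : eigenspace T μ = ⊥
  · simp [hbot, Submodule.starProjection_bot]
  obtain ⟨t, rfl⟩ : ∃ t : ℝ, μ = t := ⟨_, hT.eq_re_of_eigenspace_ne_bot hbot⟩
  have hcross : ∀ i, τ i ≠ t → (eigenspace T t).starProjection
      ((eigenspace T (τ i : 𝕜)).starProjection v) = 0 := fun i hi =>
    hT.starProjection_eigenspace_eq_zero (by exact_mod_cast hi.symm)
      (Submodule.starProjection_apply_mem _ v)
  simp only [u, map_sub, map_sum]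
  by_cases ht : ∃ i, τ i = t
  · obtain ⟨i, rfl⟩ := ht
    rw [Finset.sum_eq_single i (fun k _ hk => hcross k (hτ.ne hk)) (by simp),
      Submodule.starProjection_eq_self_iff.mpr (Submodule.starProjection_apply_mem _ v), sub_self]
  · simp only [not_exists] at ht
    rw [hv t ht, Finset.sum_eq_zero (fun i _ => hcross i (ht i)), sub_zero]

end LinearMap.IsSymmetric

end InnerProductSpace

section SecularFunction

variable {ι : Type*} [Fintype ι] [Nonempty ι] {τ c : ι → ℝ}

theorem sum_div_sub_neg_of_forall_lt (hc : ∀ i, 0 < c i) {x : ℝ} (hx : ∀ i, x < τ i) :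
    ∑ i, c i / (x - τ i) < 0 :=
  Finset.sum_neg (fun i _ => div_neg_of_pos_of_neg (hc i) (sub_neg.mpr (hx i)))
    Finset.univ_nonempty

theorem sum_div_sub_lt_of_no_pole_between (hc : ∀ i, 0 < c i) {x y : ℝ} (hxy : x < y)
    (hy : ∀ i, y ≠ τ i) (hpole : ∀ i, τ i < x ↔ τ i < y) :
    ∑ i, c i / (y - τ i) < ∑ i, c i / (x - τ i) := by
  refine Finset.sum_lt_sum_of_nonempty Finset.univ_nonempty fun i _ => ?_
  rcases lt_or_gt_of_ne (hy i) with hyτ | hτy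
  · have h := one_div_lt_one_div_of_neg_of_lt (by linarith) (sub_lt_sub_right hxy (τ i))
    rw [div_eq_mul_one_div, div_eq_mul_one_div (c i)]
    exact mul_lt_mul_of_pos_left h (hc i)
  · exact div_lt_div_of_pos_left (hc i) (sub_pos.mpr ((hpole i).mpr hτy)) (by linarith)

end SecularFunction

theorem Monotone.exists_forall_lt_iff_le {α β : Type*} [LinearOrder α] [Fintype α] [Preorder β]
    {f : α → β} (hf : Monotone f) {x : β} (hx : ∃ i, f i < x) :
    ∃ m, ∀ i, f i < x ↔ i ≤ m := by
  classical
  let s := Finset.univ.filter (f · < x)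
  obtain ⟨i₀, hi₀⟩ := hx
  have hs : s.Nonempty := ⟨i₀, by simpa [s] using hi₀⟩
  refine ⟨s.max' hs, fun i => ⟨fun hi => s.le_max' i (by simpa [s] using hi), fun hi => ?_⟩⟩
  exact (hf hi).trans_lt (by simpa [s] using s.max'_mem hs)

theorem interlace_of_sum_div_sub_eq_one {r : ℕ} {τ μ c : Fin r → ℝ}
    (hτ : StrictMono τ) (hμ : StrictMono μ) (hc : ∀ i, 0 < c i) (hpole : ∀ k i, μ k ≠ τ i)
    (hroot : ∀ k, ∑ i, c i / (μ k - τ i) = 1) :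
    (∀ k, τ k < μ k) ∧ ∀ (k : Fin r) (h : (k : ℕ) + 1 < r), μ k < τ ⟨(k : ℕ) + 1, h⟩ := by
  have hbelow : ∀ k, ∃ i, τ i < μ k := by
    intro k
    have : Nonempty (Fin r) := ⟨k⟩
    by_contra! h
    have := sum_div_sub_neg_of_forall_lt hc (fun i => (h i).lt_of_ne (hpole k i))
    linarith [hroot k]
  -- `τ (idx k)` is the last pole below `μ k`
  choose idx hidx using fun k => hτ.monotone.exists_forall_lt_iff_le (hbelow k)
  have hidx_mono : StrictMono idx := by
    intro k l hkl
    have hle : idx k ≤ idx l := (hidx l _).mp (((hidx k _).mpr le_rfl).trans (hμ hkl))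
    refine hle.lt_of_ne fun heq => ?_
    have : Nonempty (Fin r) := ⟨k⟩
    have := sum_div_sub_lt_of_no_pole_between hc (hμ hkl) (hpole l)
      (fun i => by rw [hidx, hidx, heq])
    linarith [hroot k, hroot l]
  have hid : ∀ k, idx k = k := fun k => le_antisymm hidx_mono.apply_le hidx_mono.le_apply
  refine ⟨fun k => (hidx k k).mpr (hid k).ge, fun k h => ?_⟩
  refine (not_lt.mp fun hlt => ?_).lt_of_ne (hpole k _)
  have := (hidx k _).mp hlt
  rw [hid, Fin.le_def] at this
  exact absurd this (by simp)

section MainAngle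

variable {V : Type*} [Fintype V] [DecidableEq V]

def onesVec (V : Type*) : EuclideanSpace ℂ V := WithLp.toLp 2 fun _ => 1

theorem eigSp_eq_eigenspace (A : Matrix V V ℂ) (t : ℝ) :
    eigSp A t = eigenspace (toEuclideanLin A) (t : ℂ) := by
  rw [eigSp, eigenspace_def]
  rfl

theorem mainAngle_ne_zero_iff {A : Matrix V V ℂ} {t : ℝ} :
    mainAngle A t ≠ 0 ↔
      (eigenspace (toEuclideanLin A) (t : ℂ)).starProjection (onesVec V) ≠ 0 := by
  rw [← eigSp_eq_eigenspace]
  change 1 / Real.sqrt (Fintype.card V) * ‖(eigSp A t).starProjection (onesVec V)‖ ≠ 0 ↔ _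
  rcases isEmpty_or_nonempty V with _ | _
  · simp [Subsingleton.elim _ (0 : EuclideanSpace ℂ V)]
  · rw [mul_ne_zero_iff, norm_ne_zero_iff, and_iff_right (by positivity)]

theorem toEuclideanLin_add_smul_of_one_apply (A : Matrix V V ℂ) (a : ℂ)
    (v : EuclideanSpace ℂ V) :
    toEuclideanLin (A + a • of fun _ _ => 1) v =
      toEuclideanLin A v + (a * ⟪onesVec V, v⟫_ℂ) • onesVec V := by
  ext i
  simp [onesVec, toLpLin_apply, mulVec, dotProduct, PiLp.inner_apply, Finset.mul_sum]

end MainAngle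

/-- if `a > 0`, the distinct main eigenvalues of `H` and of `M = H + a J`
strictly interlace as `τ 1 < μ 1 < τ 2 < μ 2 < ⋯ < τ r < μ r`. -/
theorem main_eigenvalue_interlacing_pos {n r : ℕ} (H : Matrix (Fin n) (Fin n) ℂ)
    (hH : H.IsHermitian) (a : ℝ) (ha : 0 < a) (M : Matrix (Fin n) (Fin n) ℂ)
    (hM : M = H + (a : ℂ) • Matrix.of (fun _ _ => (1 : ℂ)))
    (τ : Fin r → ℝ) (hτ : StrictMono τ)
    (hmainH : ∀ t : ℝ, mainAngle H t ≠ 0 ↔ ∃ i, τ i = t)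
    (μ : Fin r → ℝ) (hμ : StrictMono μ)
    (hmainM : ∀ t : ℝ, mainAngle M t ≠ 0 ↔ ∃ i, μ i = t) :
    (∀ i : Fin r, τ i < μ i) ∧
      ∀ (i : Fin r) (h : (i : ℕ) + 1 < r), μ i < τ ⟨(i : ℕ) + 1, h⟩ := by
  set T := toEuclideanLin H
  have hT : T.IsSymmetric := isSymmetric_toEuclideanLin_iff.mpr hH
  set w : Fin r → EuclideanSpace ℂ (Fin n) := fun i =>
    (eigenspace T (τ i : ℂ)).starProjection (onesVec _)
  have hw_ne i : w i ≠ 0 := mainAngle_ne_zero_iff.mp ((hmainH _).mpr ⟨i, rfl⟩)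
  have hones : ∑ i, w i = onesVec _ :=
    hT.sum_starProjection_eigenspace_eq_self hτ.injective fun t ht => by
      by_contra h
      obtain ⟨i, hi⟩ := (hmainH t).mp (mainAngle_ne_zero_iff.mpr h)
      exact ht i hi
  have hsecular k : (∀ i, μ k ≠ τ i) ∧ ∑ i, a * ‖w i‖ ^ 2 / (μ k - τ i) = 1 := by
    set z := (eigenspace (toEuclideanLin M) (μ k : ℂ)).starProjection (onesVec _)
    have hz_ne : z ≠ 0 := mainAngle_ne_zero_iff.mp ((hmainM _).mpr ⟨k, rfl⟩)
    refine hT.sum_div_sub_eq_one_of_add_rankOne_apply_eq (z := z) ha.ne'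
      (fun i => mem_eigenspace_iff.mp (Submodule.starProjection_apply_mem _ _)) hones
      (fun i => Submodule.inner_starProjection_self _ _)
      (fun i => pow_ne_zero 2 (norm_ne_zero_iff.mpr (hw_ne i))) ?_ ?_
    · subst hM
      rw [← toEuclideanLin_add_smul_of_one_apply]
      exact mem_eigenspace_iff.mp (Submodule.starProjection_apply_mem _ _)
    · rw [← Submodule.inner_starProjection_left_eq_right, Submodule.inner_starProjection_self]
      exact Complex.ofReal_ne_zero.mpr (pow_ne_zero 2 (norm_ne_zero_iff.mpr hz_ne))
  exact interlace_of_sum_div_sub_eq_one hτ hμ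
    (fun i => mul_pos ha (pow_pos (norm_pos_iff.mpr (hw_ne i)) 2))
    (fun k => (hsecular k).1) (fun k => (hsecular k).2)
end

section
/- Let d ≥ 3 be an integer and let A be the adjacency matrix of a tournament on n = 2d vertices whose Seidel matrix S = i(A − Aᵀ) has exactly the eigenvalues −θ, −φ, φ, θ with multiplicities d − 1, 1, 1, d − 1 respectively for some 0 < φ < θ, and whose smallest eigenvalue −θ is not a main eigenvalue. Then d is odd, and A is the adjacency matrix of the induced subtournament of a doubly regular tournament on 2d + 1 vertices obtained by deleting one vertex; that is, there exist a (2d+1)×(2d+1) adjacency matrix B of a doubly regular tournament and a vertex v such that the matrix obtained from B by deleting the row and column of v is permutationally similar to A. -/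
open Matrix
open scoped Classical

/-!
Write `S = I • C` with `C = A - Aᵀ`, a real skew-symmetric `±1` matrix, so that complex
conjugation maps the `μ`-eigenspace of `S` onto the `(-μ)`-eigenspace. Hence `j` is orthogonal to
both `±θ`-eigenspaces, which gives `S² j = φ² j`, and `σ = (I / φ) S j` is a real vector with
`S σ = I φ j`. The one-dimensional `(-φ)`- and `φ`-eigenspaces are the lines through `j + I σ`
and `j - I σ`, and comparing `S²` with `θ² I - c (J + σ σᵀ)`, `c = (θ² - φ²) / 2d`, on every
eigenspace shows that they are equal.
The constant diagonal of `S²` forces `σ` to be a `±1` vector; the entries of `C j` and `C²` are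
integers of fixed parity, which forces `φ = 1` and `c = 1`. Then the bordered matrix
`K = [[C, σ], [-σᵀ, 0]]` satisfies `K j = 0` and `K² = J - (2d + 1) I`, so `(K + J - I) / 2` is a
doubly regular tournament on `2d + 1` vertices containing `A`, and the order of a doubly regular
tournament is `3 mod 4`, so `d` is odd.
-/

local notation "𝐉" => Matrix.of fun _ _ => (1 : ℂ)

lemma Finset.exists_sum_eq_card_sub_two_mul {ι : Type*} (s : Finset ι) (f : ι → ℂ)
    (hf : ∀ i ∈ s, f i = 1 ∨ f i = -1) : ∃ m : ℕ, ∑ i ∈ s, f i = s.card - 2 * m := by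
  classical
  induction s using Finset.induction_on with
  | empty => exact ⟨0, by simp⟩
  | insert a s ha ih =>
    obtain ⟨m, hm⟩ := ih fun i hi => hf i (Finset.mem_insert_of_mem hi)
    rw [Finset.sum_insert ha, Finset.card_insert_of_notMem ha, hm]
    rcases hf a (Finset.mem_insert_self a s) with h | h
    · exact ⟨m, by rw [h]; push_cast; ring⟩
    · exact ⟨m + 1, by rw [h]; push_cast; ring⟩

lemma Finset.exists_sum_eq_natCast {ι : Type*} (s : Finset ι) (f : ι → ℂ)
    (hf : ∀ i ∈ s, f i = 0 ∨ f i = 1) : ∃ m : ℕ, ∑ i ∈ s, f i = m := by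
  classical
  refine ⟨(s.filter (f · = 1)).card, ?_⟩
  rw [← Finset.sum_boole]
  refine Finset.sum_congr rfl fun i hi => ?_
  rcases hf i hi with h | h <;> simp [h]

lemma one_le_of_ofReal_eq_intCast {x : ℝ} {k : ℤ} (hx : 0 < x) (h : (x : ℂ) = k) : 1 ≤ x := by
  have hxk : x = k := by exact_mod_cast h
  have : (0 : ℤ) < k := by exact_mod_cast hxk ▸ hx
  rw [hxk]
  exact_mod_cast this

lemma dotProduct_mulVec_self_eq_zero {V : Type*} [Fintype V] {C : Matrix V V ℂ} (hC : Cᵀ = -C)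
    (v : V → ℂ) : v ⬝ᵥ C *ᵥ v = 0 := by
  have h : v ⬝ᵥ C *ᵥ v = -(v ⬝ᵥ C *ᵥ v) :=
    calc v ⬝ᵥ C *ᵥ v = Cᵀ *ᵥ v ⬝ᵥ v := by rw [dotProduct_mulVec, mulVec_transpose]
      _ = -(v ⬝ᵥ C *ᵥ v) := by rw [hC, neg_mulVec, neg_dotProduct, dotProduct_comm]
  linear_combination h / 2

def IsSkewSign {V : Type*} (C : Matrix V V ℂ) : Prop :=
  Cᵀ = -C ∧ ∀ x y, x ≠ y → C x y = 1 ∨ C x y = -1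

namespace IsSkewSign

variable {V : Type*} {C : Matrix V V ℂ}

lemma apply_swap (hC : IsSkewSign C) (x y : V) : C y x = -C x y :=
  congrFun (congrFun hC.1 x) y

lemma apply_self (hC : IsSkewSign C) (x : V) : C x x = 0 := by
  linear_combination hC.apply_swap x x / 2

lemma mul_apply_swap_of_ne (hC : IsSkewSign C) {x y : V} (hxy : x ≠ y) : C x y * C y x = -1 := by
  rw [hC.apply_swap x y]
  rcases hC.2 x y hxy with h | h <;> rw [h] <;> ring

lemma conjTranspose_eq_neg (hC : IsSkewSign C) : Cᴴ = -C := by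
  ext x y
  rw [conjTranspose_apply, hC.apply_swap x y, Matrix.neg_apply]
  by_cases hxy : x = y
  · simp [hxy, hC.apply_self]
  · rcases hC.2 x y hxy with h | h <;> simp [h]

lemma isHermitian_I_smul (hC : IsSkewSign C) : (Complex.I • C).IsHermitian := by
  rw [IsHermitian, conjTranspose_smul, hC.conjTranspose_eq_neg, Complex.star_def, Complex.conj_I,
    neg_smul_neg]

variable [Fintype V]

lemma mul_of_one_eq_zero (hrow : C *ᵥ 1 = 0) : C * 𝐉 = 0 := by
  ext x y
  simpa [mul_apply, mulVec, dotProduct] using congrFun hrow x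

lemma of_one_mul_eq_zero (hC : IsSkewSign C) (hrow : C *ᵥ 1 = 0) : 𝐉 * C = 0 := by
  ext x y
  have := congrFun hrow y
  simp only [mulVec, dotProduct, mul_one, Pi.one_apply, Pi.zero_apply] at this
  simp only [mul_apply, of_apply, one_mul, Matrix.zero_apply]
  rw [Finset.sum_congr rfl fun u _ => hC.apply_swap y u, Finset.sum_neg_distrib, this, neg_zero]

variable [DecidableEq V]

lemma exists_mulVec_one_apply (hC : IsSkewSign C) (x : V) :
    ∃ m : ℕ, (C *ᵥ 1) x = Fintype.card V - 1 - 2 * m := by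
  obtain ⟨m, hm⟩ := Finset.exists_sum_eq_card_sub_two_mul {x}ᶜ (C x) fun y hy =>
    hC.2 x y (Ne.symm (by simpa using hy))
  refine ⟨m, ?_⟩
  rw [mulVec, dotProduct_one, ← Finset.sum_compl_add_sum {x}, hm, Finset.card_compl,
    Finset.sum_singleton, hC.apply_self, Finset.card_singleton,
    Nat.cast_sub (Fintype.card_pos_iff.mpr ⟨x⟩)]
  ring

lemma mul_self_apply_self (hC : IsSkewSign C) (x : V) : (C * C) x x = 1 - Fintype.card V := by
  rw [mul_apply, ← Finset.sum_compl_add_sum {x}, Finset.sum_singleton, hC.apply_self,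
    Finset.sum_congr rfl fun y hy => hC.mul_apply_swap_of_ne (Ne.symm (by simpa using hy)),
    Finset.sum_const, Finset.card_compl, Finset.card_singleton, nsmul_eq_mul,
    Nat.cast_sub (Fintype.card_pos_iff.mpr ⟨x⟩)]
  ring

lemma exists_mul_self_apply (hC : IsSkewSign C) {x y : V} (hxy : x ≠ y) :
    ∃ m : ℕ, (C * C) x y = Fintype.card V - 2 - 2 * m := by
  obtain ⟨m, hm⟩ := Finset.exists_sum_eq_card_sub_two_mul {x, y}ᶜ (fun u => C x u * C u y)
    fun u hu => by
      simp only [Finset.mem_compl, Finset.mem_insert, Finset.mem_singleton, not_or] at hu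
      rcases hC.2 x u (Ne.symm hu.1) with h | h <;> rcases hC.2 u y hu.2 with h' | h' <;>
        simp [h, h']
  have hcard : 2 ≤ Fintype.card V := (Finset.card_pair hxy).symm.trans_le (Finset.card_le_univ _)
  refine ⟨m, ?_⟩
  rw [mul_apply, ← Finset.sum_compl_add_sum {x, y}, hm, Finset.sum_pair hxy, hC.apply_self,
    hC.apply_self, Finset.card_compl, Finset.card_pair hxy, Nat.cast_sub hcard]
  ring

/-- The classical correspondence between skew Hadamard matrices `C + 1` with constant row sums
and doubly regular tournaments. -/
lemma isDoublyRegular (hC : IsSkewSign C) (hrow : C *ᵥ 1 = 0)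
    (hsq : C * C = 𝐉 - (Fintype.card V : ℂ) • 1) :
    IsDoublyRegular ((1 / 2 : ℂ) • (C + 𝐉 - 1)) := by
  set n : ℂ := (Fintype.card V : ℂ)
  have hJJ : (𝐉 * 𝐉 : Matrix V V ℂ) = n • 𝐉 := by ext; simp [mul_apply, n]
  have hCt : (C + 𝐉 - 1)ᵀ = -C + 𝐉 - 1 := by
    rw [transpose_sub, transpose_add, hC.1, transpose_one]; rfl
  refine ⟨⟨fun x y => ?_, ?_⟩, ?_, ?_⟩
  · by_cases hxy : x = y
    · simp [hxy, hC.apply_self]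
    · rcases hC.2 x y hxy with h | h <;> norm_num [h, hxy]
  · rw [transpose_smul, hCt]
    ext x y
    simp only [Matrix.add_apply, Matrix.smul_apply, Matrix.sub_apply, Matrix.neg_apply,
      smul_eq_mul]
    ring
  · change ((1 / 2 : ℂ) • (C + 𝐉 - 1)) *ᵥ 1 = _
    rw [smul_mulVec, sub_mulVec, add_mulVec, hrow, one_mulVec]
    ext x
    simp only [one_div, zero_add, Pi.smul_apply, Pi.sub_apply, mulVec, dotProduct, of_apply,
      Pi.one_apply, mul_one, Finset.sum_const, Finset.card_univ, nsmul_eq_mul, smul_eq_mul]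
    ring
  · have key : (C + 𝐉 - 1) * (-C + 𝐉 - 1) = (n + 1) • (1 : Matrix V V ℂ) + (n - 3) • 𝐉 := by
      simp only [add_mul, sub_mul, mul_add, mul_sub, mul_neg, one_mul, mul_one,
        mul_of_one_eq_zero hrow, hC.of_one_mul_eq_zero hrow, hJJ, hsq]
      module
    rw [transpose_smul, hCt, smul_mul_smul_comm, key]
    module

end IsSkewSign

section Tournament

variable {V : Type*} [Fintype V] [DecidableEq V] {A : Matrix V V ℂ}

lemma IsTournament.apply_add_apply (hA : IsTournament A) (x y : V) :
    A x y + A y x = if x = y then 0 else 1 := by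
  have := congrFun (congrFun hA.2 x) y
  simp only [Matrix.add_apply, transpose_apply, Matrix.sub_apply, of_apply, one_apply] at this
  split_ifs at this ⊢ <;> simpa using this

lemma IsTournament.isSkewSign (hA : IsTournament A) : IsSkewSign (A - Aᵀ) := by
  refine ⟨by rw [transpose_sub, transpose_transpose, neg_sub], fun x y hxy => ?_⟩
  have hsum := hA.apply_add_apply x y
  rw [if_neg hxy] at hsum
  simp only [Matrix.sub_apply, transpose_apply]
  rcases hA.1 x y with h | h <;> rw [h] at hsum ⊢
  · right; linear_combination -hsum
  · left; linear_combination -hsum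

lemma IsTournament.half_smul_sub_transpose_add (hA : IsTournament A) :
    (1 / 2 : ℂ) • (A - Aᵀ + 𝐉 - 1) = A := by
  ext x y
  have := hA.apply_add_apply x y
  simp only [Matrix.smul_apply, Matrix.sub_apply, Matrix.add_apply, transpose_apply, of_apply,
    one_apply, smul_eq_mul]
  split_ifs at this ⊢ <;> linear_combination (-1 / 2 : ℂ) * this

lemma IsDoublyRegular.exists_card_eq [Nontrivial V] (hA : IsDoublyRegular A) :
    ∃ k : ℕ, Fintype.card V = 4 * k + 3 := by
  obtain ⟨x, y, hxy⟩ := exists_pair_ne V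
  obtain ⟨k, hk⟩ := Finset.exists_sum_eq_natCast Finset.univ (fun u => A x u * A y u)
    fun u _ => by rcases hA.1.1 x u with h | h <;> rcases hA.1.1 y u with h' | h' <;> simp [h, h']
  have hentry := congrFun (congrFun hA.2.2 x) y
  simp only [mul_apply, transpose_apply, hk, Matrix.add_apply, Matrix.smul_apply, one_apply_ne hxy,
    of_apply, smul_eq_mul] at hentry
  refine ⟨k, ?_⟩
  exact_mod_cast (by linear_combination (-4 : ℂ) * hentry : (Fintype.card V : ℂ) = 4 * k + 3)

end Tournament

/-- The matrix `[[C, σ], [-σᵀ, 0]]`, the new index being `Fin.last n`. -/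
def border {n : ℕ} (C : Matrix (Fin n) (Fin n) ℂ) (σ : Fin n → ℂ) :
    Matrix (Fin (n + 1)) (Fin (n + 1)) ℂ :=
  Fin.snoc (fun i => Fin.snoc (C i) (σ i)) (Fin.snoc (-σ) 0)

section Border

variable {n : ℕ} {C : Matrix (Fin n) (Fin n) ℂ} {σ : Fin n → ℂ}

@[simp] lemma border_castSucc_castSucc (i j : Fin n) :
    border C σ i.castSucc j.castSucc = C i j := by simp [border]

@[simp] lemma border_castSucc_last (i : Fin n) : border C σ i.castSucc (Fin.last n) = σ i := by
  simp [border]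

@[simp] lemma border_last_castSucc (j : Fin n) : border C σ (Fin.last n) j.castSucc = -σ j := by
  simp [border]

@[simp] lemma border_last_last : border C σ (Fin.last n) (Fin.last n) = 0 := by simp [border]

lemma isSkewSign_border (hC : IsSkewSign C) (hσ : ∀ i, σ i = 1 ∨ σ i = -1) :
    IsSkewSign (border C σ) := by
  refine ⟨?_, fun i j hij => ?_⟩
  · ext i j
    induction i using Fin.lastCases <;> induction j using Fin.lastCases
    case cast.cast i j => simpa using hC.apply_swap i j
    all_goals simp
  · induction i using Fin.lastCases <;> induction j using Fin.lastCases
    case last.last => exact absurd rfl hij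
    case last.cast j => simpa [neg_eq_iff_eq_neg, or_comm] using hσ j
    case cast.last i => simpa using hσ i
    case cast.cast i j => simpa using hC.2 i j (by simpa using hij)

lemma border_mulVec_one (hC : IsSkewSign C) (hrow : C *ᵥ 1 = -σ) : border C σ *ᵥ 1 = 0 := by
  have hsum : ∑ i, σ i = 0 := by
    have := dotProduct_mulVec_self_eq_zero hC.1 1
    rw [hrow] at this
    simpa [dotProduct] using this
  ext i
  induction i using Fin.lastCases with
  | last => simp [mulVec, dotProduct, Fin.sum_univ_castSucc, hsum]
  | cast i =>
    have := congrFun hrow i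
    simp only [mulVec, dotProduct, Pi.one_apply, mul_one, Pi.neg_apply] at this
    simp [mulVec, dotProduct, Fin.sum_univ_castSucc, this]

lemma border_mul_self (hC : IsSkewSign C) (hσ : ∀ i, σ i = 1 ∨ σ i = -1)
    (hCσ : C *ᵥ σ = 1) (hsq : C * C = 𝐉 + vecMulVec σ σ - ((n : ℂ) + 1) • 1) :
    border C σ * border C σ = 𝐉 - ((n : ℂ) + 1) • 1 := by
  ext i j
  induction i using Fin.lastCases <;> induction j using Fin.lastCases
  case last.last =>
    have hsq1 : ∀ i, -σ i * σ i = -1 := fun i => by rcases hσ i with h | h <;> simp [h]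
    simp [mul_apply, Fin.sum_univ_castSucc, hsq1]
  case last.cast j =>
    have := congrFun hCσ j
    simp only [mulVec, dotProduct, Pi.one_apply] at this
    simp [mul_apply, Fin.sum_univ_castSucc, hC.apply_swap j, mul_comm (σ _), this,
      one_apply, (Fin.castSucc_lt_last j).ne']
  case cast.last i =>
    simpa [mul_apply, Fin.sum_univ_castSucc, mulVec, dotProduct] using congrFun hCσ i
  case cast.cast i j =>
    have := congrFun (congrFun hsq i) j
    simp only [mul_apply] at this
    simp only [mul_apply, Fin.sum_univ_castSucc, border_castSucc_castSucc, this, Matrix.sub_apply,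
      Matrix.add_apply, of_apply, vecMulVec_apply, Matrix.smul_apply, one_apply, smul_eq_mul,
      mul_ite, mul_one, mul_zero, border_castSucc_last, border_last_castSucc, mul_neg,
      Fin.castSucc_inj]
    ring

lemma isDoublyRegular_border (hC : IsSkewSign C) (hσ : ∀ i, σ i = 1 ∨ σ i = -1)
    (hrow : C *ᵥ 1 = -σ) (hCσ : C *ᵥ σ = 1)
    (hsq : C * C = 𝐉 + vecMulVec σ σ - ((n : ℂ) + 1) • 1) :
    IsDoublyRegular ((1 / 2 : ℂ) • (border C σ + 𝐉 - 1)) :=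
  (isSkewSign_border hC hσ).isDoublyRegular (border_mulVec_one hC hrow)
    (by rw [border_mul_self hC hσ hCσ hsq, Fintype.card_fin, Nat.cast_add_one])

lemma submatrix_castSucc_border :
    ((1 / 2 : ℂ) • (border C σ + 𝐉 - 1)).submatrix Fin.castSucc Fin.castSucc =
      (1 / 2 : ℂ) • (C + 𝐉 - 1) := by
  ext i j
  simp [one_apply]

end Border

section Spectral

variable {V : Type*} [Fintype V] {H : Matrix V V ℂ}

namespace Matrix.IsHermitian

lemma star_dotProduct_mulVec (hH : H.IsHermitian) {μ : ℝ} {u : V → ℂ}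
    (hu : H *ᵥ u = (μ : ℂ) • u) (v : V → ℂ) : star u ⬝ᵥ H *ᵥ v = μ * (star u ⬝ᵥ v) := by
  rw [dotProduct_mulVec, ← hH.eq, ← star_mulVec, hu, star_smul, Complex.star_def,
    Complex.conj_ofReal, smul_dotProduct, smul_eq_mul]

lemma mulVec_star_of_transpose_eq_neg (hH : H.IsHermitian) (hskew : Hᵀ = -H) {μ : ℝ}
    {u : V → ℂ} (hu : H *ᵥ u = (μ : ℂ) • u) : H *ᵥ star u = ((-μ : ℝ) : ℂ) • star u := by
  have h := congrArg star hu
  rw [star_mulVec, hH.eq, ← mulVec_transpose, hskew, neg_mulVec, star_smul, Complex.star_def,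
    Complex.conj_ofReal] at h
  rw [Complex.ofReal_neg, neg_smul, ← h, neg_neg]

variable [DecidableEq V]

lemma eq_zero_of_forall_star_dotProduct (hH : H.IsHermitian) {v : V → ℂ}
    (h : ∀ (μ : ℝ) (u : V → ℂ), H *ᵥ u = (μ : ℂ) • u → star u ⬝ᵥ v = 0) : v = 0 := by
  set b := hH.eigenvectorBasis
  have hrepr : b.repr (WithLp.toLp 2 v) = 0 := by
    ext i
    rw [b.repr_apply_apply, EuclideanSpace.inner_eq_star_dotProduct, dotProduct_comm]
    exact h _ _ (by rw [hH.mulVec_eigenvectorBasis, Complex.coe_smul])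
  simpa using hrepr

lemma ext_of_mulVec_eigenvector (hH : H.IsHermitian) {M₁ M₂ : Matrix V V ℂ}
    (h : ∀ (μ : ℝ) (u : V → ℂ), H *ᵥ u = (μ : ℂ) • u → M₁ *ᵥ u = M₂ *ᵥ u) : M₁ = M₂ := by
  refine toEuclideanLin.injective (hH.eigenvectorBasis.toBasis.ext fun i => ?_)
  simp only [OrthonormalBasis.coe_toBasis, toLpLin_apply]
  rw [h _ _ (by rw [hH.mulVec_eigenvectorBasis, Complex.coe_smul])]

end Matrix.IsHermitian

variable [DecidableEq V]

lemma toLp_mem_eigSp_iff {μ : ℝ} {u : V → ℂ} :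
    WithLp.toLp 2 u ∈ eigSp H μ ↔ H *ᵥ u = (μ : ℂ) • u := by
  rw [eigSp, LinearMap.mem_ker, LinearMap.sub_apply, LinearMap.smul_apply, LinearMap.id_apply,
    sub_eq_zero, toLpLin_apply, ← WithLp.toLp_smul, (WithLp.toLp_injective 2).eq_iff]

lemma eigSp_ne_bot {μ : ℝ} {u : V → ℂ} (hu : H *ᵥ u = (μ : ℂ) • u) (hu0 : u ≠ 0) :
    eigSp H μ ≠ ⊥ :=
  (Submodule.ne_bot_iff _).mpr ⟨_, toLp_mem_eigSp_iff.mpr hu, by simpa using hu0⟩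

lemma exists_eq_smul_of_eigMult_eq_one {μ : ℝ} (h : eigMult H μ = 1) {w u : V → ℂ}
    (hw : H *ᵥ w = (μ : ℂ) • w) (hw0 : w ≠ 0) (hu : H *ᵥ u = (μ : ℂ) • u) :
    ∃ t : ℂ, u = t • w := by
  obtain ⟨t, ht⟩ := (finrank_eq_one_iff_of_nonzero' (⟨_, toLp_mem_eigSp_iff.mpr hw⟩ : eigSp H μ)
    (by simpa using hw0)).mp h ⟨_, toLp_mem_eigSp_iff.mpr hu⟩
  exact ⟨t, by simpa using congrArg (fun v : eigSp H μ => (v : EuclideanSpace ℂ V).ofLp) ht.symm⟩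

lemma star_dotProduct_one_of_mainAngle_eq_zero [Nonempty V] {μ : ℝ} (h : mainAngle H μ = 0)
    {u : V → ℂ} (hu : H *ᵥ u = (μ : ℂ) • u) : star u ⬝ᵥ 1 = 0 := by
  have hproj : (eigSp H μ).starProjection (WithLp.toLp 2 fun _ => 1) = 0 := by
    simpa [mainAngle, Fintype.card_ne_zero] using h
  have hmem := (eigSp H μ).sub_starProjection_mem_orthogonal (WithLp.toLp 2 fun _ => 1)
  rw [hproj, sub_zero] at hmem
  have := Submodule.inner_right_of_mem_orthogonal (toLp_mem_eigSp_iff.mpr hu) hmem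
  rwa [EuclideanSpace.inner_toLp_toLp, dotProduct_comm] at this

end Spectral

section FourEigenvalues

variable {V : Type*} [Fintype V] {H : Matrix V V ℂ} {θ φ : ℝ}

lemma of_one_add_vecMulVec_mulVec (σ u : V → ℂ) :
    (𝐉 + vecMulVec σ σ) *ᵥ u = (u ⬝ᵥ 1) • 1 + (σ ⬝ᵥ u) • σ := by
  ext x
  simp only [Pi.add_apply, Pi.smul_apply, smul_eq_mul, mulVec, dotProduct, Matrix.add_apply,
    of_apply, vecMulVec_apply, Pi.one_apply, mul_one, Finset.sum_mul, ← Finset.sum_add_distrib]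
  exact Finset.sum_congr rfl fun i _ => by ring

open Complex

lemma exists_mulVec_one_eq_smul (hskew : Hᵀ = -H) (hφ : φ ≠ 0)
    (h : H *ᵥ H *ᵥ 1 = ((φ ^ 2 : ℝ) : ℂ) • 1) :
    ∃ σ : V → ℂ, H *ᵥ 1 = (-(I * φ)) • σ ∧ H *ᵥ σ = (I * φ) • 1 ∧
      σ ⬝ᵥ σ = Fintype.card V ∧ σ ⬝ᵥ 1 = 0 := by
  have hφ' : (φ : ℂ) ≠ 0 := ofReal_ne_zero.mpr hφ
  have hsq : H *ᵥ 1 ⬝ᵥ H *ᵥ 1 = -(φ ^ 2 * Fintype.card V) := by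
    rw [dotProduct_mulVec, ← mulVec_transpose, hskew, neg_mulVec, neg_dotProduct, h]
    simp [dotProduct, mul_comm]
  refine ⟨(I / φ) • H *ᵥ 1, ?_, ?_, ?_, ?_⟩
  · rw [smul_smul, show -(I * φ) * (I / φ) = 1 by field_simp; rw [I_sq]; ring, one_smul]
  · rw [mulVec_smul, h, smul_smul]
    congr 1
    push_cast
    field_simp
  · rw [smul_dotProduct, dotProduct_smul, hsq, smul_eq_mul, smul_eq_mul]
    field_simp
    rw [I_sq]
    ring
  · rw [smul_dotProduct, dotProduct_comm, dotProduct_mulVec_self_eq_zero hskew, smul_zero]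

variable {σ : V → ℂ}

lemma mulVec_one_add_smul_eq (h1 : H *ᵥ 1 = (-(I * φ)) • σ) (hσ : H *ᵥ σ = (I * φ) • 1)
    {s : ℂ} (hs : s ^ 2 = -1) {ν : ℝ} (hν : s * I * φ = ν) :
    H *ᵥ (1 + s • σ) = (ν : ℂ) • (1 + s • σ) := by
  rw [mulVec_add, mulVec_smul, h1, hσ, ← hν, ← sub_eq_zero]
  linear_combination (norm := module) (-(I * φ)) • hs • σ

variable [DecidableEq V]

lemma dotProduct_one_eq_zero_of_mainAngle_eq_zero [Nonempty V] (hH : H.IsHermitian)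
    (hskew : Hᵀ = -H) (hβ : mainAngle H (-θ) = 0) {u : V → ℂ}
    (hu : H *ᵥ u = ((-θ : ℝ) : ℂ) • u ∨ H *ᵥ u = (θ : ℂ) • u) : u ⬝ᵥ 1 = 0 := by
  rcases hu with hu | hu
  · rw [← star_star u, star_dotProduct, star_one, dotProduct_comm,
      star_dotProduct_one_of_mainAngle_eq_zero hβ hu, star_zero]
  · simpa using star_dotProduct_one_of_mainAngle_eq_zero hβ
      (hH.mulVec_star_of_transpose_eq_neg hskew hu)

lemma mulVec_mulVec_one_eq_of_forall_eigenvalue (hH : H.IsHermitian) (hskew : Hᵀ = -H)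
    (heig : ∀ (μ : ℝ) (u : V → ℂ), H *ᵥ u = (μ : ℂ) • u → u ≠ 0 →
      μ = -θ ∨ μ = -φ ∨ μ = φ ∨ μ = θ)
    (hθ : ∀ u : V → ℂ, H *ᵥ u = ((-θ : ℝ) : ℂ) • u ∨ H *ᵥ u = (θ : ℂ) • u → u ⬝ᵥ 1 = 0) :
    H *ᵥ H *ᵥ 1 = ((φ ^ 2 : ℝ) : ℂ) • 1 := by
  refine sub_eq_zero.mp (hH.eq_zero_of_forall_star_dotProduct fun μ u hu => ?_)
  rw [dotProduct_sub, hH.star_dotProduct_mulVec hu, hH.star_dotProduct_mulVec hu,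
    dotProduct_smul, smul_eq_mul]
  by_cases hu0 : u = 0
  · simp [hu0]
  rcases heig μ u hu hu0 with rfl | rfl | rfl | rfl
  · rw [hθ _ (Or.inr (by simpa using hH.mulVec_star_of_transpose_eq_neg hskew hu))]
    ring
  · push_cast; ring
  · push_cast; ring
  · rw [hθ _ (Or.inl (hH.mulVec_star_of_transpose_eq_neg hskew hu))]
    ring

lemma mul_self_mulVec_add_smul_eq (h1 : H *ᵥ 1 = (-(I * φ)) • σ) (hσ : H *ᵥ σ = (I * φ) • 1)
    (hσσ : σ ⬝ᵥ σ = Fintype.card V) (hσ1 : σ ⬝ᵥ 1 = 0) {c : ℝ}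
    (hc : c * Fintype.card V = θ ^ 2 - φ ^ 2) (a b : ℂ) :
    (H * H) *ᵥ (a • 1 + b • σ) =
      (((θ ^ 2 : ℝ) : ℂ) • 1 - (c : ℂ) • (𝐉 + vecMulVec σ σ)) *ᵥ (a • 1 + b • σ) := by
  have h11 : (1 : V → ℂ) ⬝ᵥ 1 = Fintype.card V := by simp [dotProduct]
  have hcn : ((θ ^ 2 : ℝ) : ℂ) - c * Fintype.card V = φ ^ 2 := by exact_mod_cast by linarith
  rw [← mulVec_mulVec]
  simp only [sub_mulVec, smul_mulVec, one_mulVec, of_one_add_vecMulVec_mulVec, mulVec_add,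
    mulVec_smul, h1, hσ, hσσ, hσ1, h11]
  ext x
  simp only [Pi.add_apply, Pi.smul_apply, Pi.sub_apply, Pi.one_apply, smul_eq_mul]
  linear_combination -(a + b * σ x) * hcn - (a + b * σ x) * φ ^ 2 * I_sq

lemma mul_self_mulVec_eq_of_dotProduct_one_eq_zero (hskew : Hᵀ = -H) (hφ : φ ≠ 0)
    (h1 : H *ᵥ 1 = (-(I * φ)) • σ) {c ν : ℝ} (hν : ν ^ 2 = θ ^ 2) {u : V → ℂ}
    (hu : H *ᵥ u = (ν : ℂ) • u) (hu1 : u ⬝ᵥ 1 = 0) :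
    (H * H) *ᵥ u = (((θ ^ 2 : ℝ) : ℂ) • 1 - (c : ℂ) • (𝐉 + vecMulVec σ σ)) *ᵥ u := by
  have hσu : -(I * φ) * (σ ⬝ᵥ u) = -(ν * (u ⬝ᵥ 1)) := by
    rw [← smul_eq_mul, ← smul_dotProduct, ← h1, dotProduct_comm, dotProduct_mulVec,
      ← mulVec_transpose, hskew, neg_mulVec, hu, neg_dotProduct, smul_dotProduct, smul_eq_mul]
  rw [hu1, mul_zero, neg_zero, mul_eq_zero] at hσu
  have hσu' : σ ⬝ᵥ u = 0 := hσu.resolve_left (by simp [hφ, I_ne_zero])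
  rw [← mulVec_mulVec, hu, mulVec_smul, hu, smul_smul, sub_mulVec, smul_mulVec, smul_mulVec,
    one_mulVec, of_one_add_vecMulVec_mulVec, hu1, hσu', zero_smul, zero_smul, add_zero,
    smul_zero, sub_zero, ← hν]
  push_cast
  ring_nf

lemma mul_self_eq_of_four_eigenvalues [Nonempty V] (hH : H.IsHermitian) (hskew : Hᵀ = -H)
    (hφ : φ ≠ 0)
    (heig : ∀ (μ : ℝ) (u : V → ℂ), H *ᵥ u = (μ : ℂ) • u → u ≠ 0 →
      μ = -θ ∨ μ = -φ ∨ μ = φ ∨ μ = θ)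
    (hm₁ : eigMult H (-φ) = 1) (hm₂ : eigMult H φ = 1)
    (hθ : ∀ u : V → ℂ, H *ᵥ u = ((-θ : ℝ) : ℂ) • u ∨ H *ᵥ u = (θ : ℂ) • u → u ⬝ᵥ 1 = 0)
    (h1 : H *ᵥ 1 = (-(I * φ)) • σ) (hσ : H *ᵥ σ = (I * φ) • 1)
    (hσσ : σ ⬝ᵥ σ = Fintype.card V) (hσ1 : σ ⬝ᵥ 1 = 0)
    {c : ℝ} (hc : c * Fintype.card V = θ ^ 2 - φ ^ 2) :
    H * H = ((θ ^ 2 : ℝ) : ℂ) • 1 - (c : ℂ) • (𝐉 + vecMulVec σ σ) := by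
  have hw0 : ∀ s : ℂ, 1 + s • σ ≠ 0 := fun s h => by
    have := congrArg (· ⬝ᵥ (1 : V → ℂ)) h
    simp only [add_dotProduct, smul_dotProduct, hσ1, smul_zero, add_zero, zero_dotProduct] at this
    simp [dotProduct, Fintype.card_ne_zero] at this
  have hspan := mul_self_mulVec_add_smul_eq h1 hσ hσσ hσ1 hc
  refine hH.ext_of_mulVec_eigenvector fun μ u hu => ?_
  by_cases hu0 : u = 0
  · simp [hu0]
  rcases heig μ u hu hu0 with rfl | rfl | rfl | rfl
  · exact mul_self_mulVec_eq_of_dotProduct_one_eq_zero hskew hφ h1 (by ring) hu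
      (hθ u (Or.inl hu))
  · obtain ⟨t, rfl⟩ := exists_eq_smul_of_eigMult_eq_one hm₁
      (mulVec_one_add_smul_eq h1 hσ I_sq (by simp)) (hw0 I) hu
    simpa [smul_add, smul_smul] using hspan t (t * I)
  · obtain ⟨t, rfl⟩ := exists_eq_smul_of_eigMult_eq_one hm₂
      (mulVec_one_add_smul_eq h1 hσ (by simp) (by simp)) (hw0 (-I)) hu
    simpa [smul_add, smul_smul] using hspan t (t * -I)
  · exact mul_self_mulVec_eq_of_dotProduct_one_eq_zero hskew hφ h1 rfl hu (hθ u (Or.inr hu))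

end FourEigenvalues

namespace IsSkewSign

variable {V : Type*} [Fintype V] [DecidableEq V] {C : Matrix V V ℂ} {σ : V → ℂ} {θ φ c : ℝ}

lemma sq_eq_one_of_mul_self_eq [Nonempty V] (hC : IsSkewSign C) (hc : c ≠ 0)
    (hsq : C * C = (c : ℂ) • (𝐉 + vecMulVec σ σ) - ((θ ^ 2 : ℝ) : ℂ) • 1)
    (hσσ : σ ⬝ᵥ σ = Fintype.card V) :
    (∀ x, σ x ^ 2 = 1) ∧ θ ^ 2 = (Fintype.card V : ℝ) - 1 + 2 * c := by
  set n : ℂ := (Fintype.card V : ℂ)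
  have hn : n ≠ 0 := by simp [n, Fintype.card_ne_zero]
  have hdiag : ∀ x, (c : ℂ) * (1 + σ x ^ 2) = 1 - n + θ ^ 2 := fun x => by
    have := hC.mul_self_apply_self x
    rw [hsq] at this
    simp only [Matrix.sub_apply, Matrix.smul_apply, Matrix.add_apply, of_apply, vecMulVec_apply,
      one_apply_eq, smul_eq_mul, mul_one] at this
    push_cast at this
    linear_combination this
  have hsum : (c : ℂ) * (n + n) = n * (1 - n + θ ^ 2) := by
    have := Finset.sum_congr rfl fun x (_ : x ∈ Finset.univ) => hdiag x
    rw [← Finset.mul_sum, Finset.sum_add_distrib] at this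
    have hσσ' : ∑ x, σ x ^ 2 = n := by simpa [dotProduct, sq] using hσσ
    simp only [Finset.sum_const, Finset.card_univ, nsmul_eq_mul, mul_one, hσσ'] at this
    linear_combination this
  have h2c : 2 * (c : ℂ) = 1 - n + θ ^ 2 := mul_left_cancel₀ hn (by linear_combination hsum)
  refine ⟨fun x => ?_, Complex.ofReal_injective (by push_cast; linear_combination -h2c)⟩
  have := hdiag x
  rw [← h2c] at this
  linear_combination (mul_left_cancel₀ (Complex.ofReal_ne_zero.mpr hc) (by linear_combination this :
    (c : ℂ) * (σ x ^ 2) = c * 1))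

lemma one_le_of_mulVec_one_eq [Nonempty V] (hC : IsSkewSign C) (hσ : ∀ x, σ x = 1 ∨ σ x = -1)
    (hφ : 0 < φ) (hrow : C *ᵥ 1 = -(φ : ℂ) • σ) : 1 ≤ φ := by
  obtain ⟨x⟩ := ‹Nonempty V›
  obtain ⟨m, hm⟩ := hC.exists_mulVec_one_apply x
  have hx := congrFun hrow x
  simp only [Pi.smul_apply, smul_eq_mul, hm] at hx
  rcases hσ x with h | h <;> rw [h] at hx
  · exact one_le_of_ofReal_eq_intCast (k := 2 * m + 1 - Fintype.card V) hφ
      (by push_cast; linear_combination hx)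
  · exact one_le_of_ofReal_eq_intCast (k := Fintype.card V - 1 - 2 * m) hφ
      (by push_cast; linear_combination -hx)

lemma one_le_of_mul_self_eq (hC : IsSkewSign C) (hσ : ∀ x, σ x = 1 ∨ σ x = -1)
    (hn : Even (Fintype.card V)) (h2 : 2 < Fintype.card V) (hc : 0 < c)
    (hsq : C * C = (c : ℂ) • (𝐉 + vecMulVec σ σ) - ((θ ^ 2 : ℝ) : ℂ) • 1) : 1 ≤ c := by
  obtain ⟨x, y, hxy, hσxy⟩ := Fintype.exists_ne_map_eq_of_card_lt (fun x => decide (σ x = 1))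
    (by simpa using h2)
  have hσxy' : σ x * σ y = 1 := by
    rcases hσ x with h | h <;> rcases hσ y with h' | h' <;> simp_all
  obtain ⟨m, hm⟩ := hC.exists_mul_self_apply hxy
  obtain ⟨d, hd⟩ := hn
  rw [hsq] at hm
  simp only [Matrix.sub_apply, Matrix.smul_apply, Matrix.add_apply, of_apply, vecMulVec_apply,
    one_apply_ne hxy, smul_eq_mul, mul_zero, sub_zero, hσxy', hd] at hm
  exact one_le_of_ofReal_eq_intCast (k := d - 1 - m) hc
    (by push_cast at hm ⊢; linear_combination hm / 2)

lemma eq_one_of_mul_self_eq (hC : IsSkewSign C) (hn : Even (Fintype.card V))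
    (h2 : 2 < Fintype.card V) (hφ : 0 < φ) (hφθ : φ < θ) (hrow : C *ᵥ 1 = -(φ : ℂ) • σ)
    (hsq : C * C = (c : ℂ) • (𝐉 + vecMulVec σ σ) - ((θ ^ 2 : ℝ) : ℂ) • 1)
    (hσσ : σ ⬝ᵥ σ = Fintype.card V) (hc : c * Fintype.card V = θ ^ 2 - φ ^ 2) :
    (∀ x, σ x = 1 ∨ σ x = -1) ∧ φ = 1 ∧ c = 1 := by
  have : Nonempty V := Fintype.card_pos_iff.mp (by omega)
  have h2' : (2 : ℝ) < Fintype.card V := by exact_mod_cast h2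
  have hc0 : 0 < c := pos_of_mul_pos_left (hc ▸ by nlinarith : 0 < c * Fintype.card V) (by linarith)
  obtain ⟨hσsq, hθ⟩ := hC.sq_eq_one_of_mul_self_eq hc0.ne' hsq hσσ
  have hσ : ∀ x, σ x = 1 ∨ σ x = -1 := fun x => sq_eq_one_iff.mp (hσsq x)
  have hφ1 := hC.one_le_of_mulVec_one_eq hσ hφ hrow
  have hc1 := hC.one_le_of_mul_self_eq hσ hn h2 hc0 hsq
  -- `φ ^ 2 - 1 = (2 - n) (c - 1)`, which forces both `φ` and `c` to be `1`
  have hc1' : c = 1 := by nlinarith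
  exact ⟨hσ, by nlinarith, hc1'⟩

open Complex in
theorem exists_of_four_eigenvalues (hC : IsSkewSign C) (hn : Even (Fintype.card V))
    (h2 : 2 < Fintype.card V) (hφ : 0 < φ) (hφθ : φ < θ)
    (heig : ∀ μ : ℝ, eigSp (I • C) μ ≠ ⊥ → μ = -θ ∨ μ = -φ ∨ μ = φ ∨ μ = θ)
    (hm₁ : eigMult (I • C) (-φ) = 1) (hm₂ : eigMult (I • C) φ = 1)
    (hβ : mainAngle (I • C) (-θ) = 0) :
    ∃ σ : V → ℂ, (∀ x, σ x = 1 ∨ σ x = -1) ∧ C *ᵥ 1 = -σ ∧ C *ᵥ σ = 1 ∧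
      C * C = 𝐉 + vecMulVec σ σ - ((Fintype.card V : ℂ) + 1) • 1 := by
  have : Nonempty V := Fintype.card_pos_iff.mp (by omega)
  have hH := hC.isHermitian_I_smul
  have hskew : (I • C)ᵀ = -(I • C) := by rw [transpose_smul, hC.1, smul_neg]
  have heig' : ∀ (μ : ℝ) (u : V → ℂ), (I • C) *ᵥ u = (μ : ℂ) • u → u ≠ 0 →
      μ = -θ ∨ μ = -φ ∨ μ = φ ∨ μ = θ := fun μ u hu hu0 => heig μ (eigSp_ne_bot hu hu0)
  have hθ := fun u => dotProduct_one_eq_zero_of_mainAngle_eq_zero hH hskew hβ (u := u)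
  obtain ⟨σ, h1, hσ, hσσ, hσ1⟩ := exists_mulVec_one_eq_smul hskew hφ.ne'
    (mulVec_mulVec_one_eq_of_forall_eigenvalue hH hskew heig' hθ)
  have hc : (θ ^ 2 - φ ^ 2) / Fintype.card V * Fintype.card V = θ ^ 2 - φ ^ 2 :=
    div_mul_cancel₀ _ (by positivity)
  have hsq := mul_self_eq_of_four_eigenvalues hH hskew hφ.ne' heig' hm₁ hm₂ hθ h1 hσ hσσ hσ1 hc
  rw [smul_mulVec, neg_mul_eq_mul_neg, mul_smul] at h1
  rw [smul_mulVec, mul_smul] at hσ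
  rw [smul_mul_smul_comm, I_mul_I, neg_one_smul, neg_eq_iff_eq_neg, neg_sub] at hsq
  obtain ⟨hσpm, rfl, hc1⟩ := hC.eq_one_of_mul_self_eq hn h2 hφ hφθ
    (smul_right_injective _ I_ne_zero h1) hsq hσσ hc
  refine ⟨σ, hσpm, by simpa using smul_right_injective _ I_ne_zero h1,
    by simpa using smul_right_injective _ I_ne_zero hσ, ?_⟩
  rw [hc1, one_mul] at hc
  rw [hsq, hc1, ofReal_one, one_smul, show θ ^ 2 = Fintype.card V + 1 by linarith]
  push_cast
  rfl

end IsSkewSign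

theorem type_one_four_eigenvalues_from_doublyRegular_general {d : ℕ} (hd : 3 ≤ d)
    (A : Matrix (Fin (2 * d)) (Fin (2 * d)) ℂ) (hA : IsTournament A)
    (S : Matrix (Fin (2 * d)) (Fin (2 * d)) ℂ) (hS : S = Complex.I • (A - Aᵀ))
    (θ φ : ℝ) (hφ : 0 < φ) (hφθ : φ < θ)
    (heig : ∀ μ : ℝ, eigSp S μ ≠ ⊥ ↔ (μ = -θ ∨ μ = -φ ∨ μ = φ ∨ μ = θ))
    (hm2 : eigMult S (-φ) = 1)
    (hm3 : eigMult S φ = 1)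
    (hβ1 : mainAngle S (-θ) = 0) :
    Odd d ∧ ∃ B : Matrix (Fin (2 * d + 1)) (Fin (2 * d + 1)) ℂ,
      IsDoublyRegular B ∧ ∃ f : Fin (2 * d) ↪ Fin (2 * d + 1), B.submatrix f f = A := by
  subst hS
  obtain ⟨σ, hσ, hrow, hCσ, hsq⟩ := hA.isSkewSign.exists_of_four_eigenvalues
    (by simp) (by simp; omega) hφ hφθ (fun μ => (heig μ).1) hm2 hm3 hβ1
  have hB := isDoublyRegular_border hA.isSkewSign hσ hrow hCσ (by simpa using hsq)
  have : Nontrivial (Fin (2 * d + 1)) := Fin.nontrivial_iff_two_le.mpr (by omega)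
  obtain ⟨k, hk⟩ := hB.exists_card_eq
  refine ⟨⟨k, by simp at hk; omega⟩, _, hB, Fin.castSuccEmb, ?_⟩
  exact submatrix_castSucc_border.trans hA.half_smul_sub_transpose_add

/-- a tournament on `n = 2d` vertices (`d ≥ 3`) whose Seidel matrix has
exactly the eigenvalues `−θ, −φ, φ, θ` (`0 < φ < θ`) with multiplicities `d−1, 1, 1, d−1`
and whose smallest eigenvalue is not main, forces `d` odd, and the tournament is obtained
from a doubly regular tournament on `2d + 1` vertices by deleting a vertex (up to
permutational similarity, i.e. `A` is a principal submatrix of such a tournament along an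
injection). -/
theorem type_one_four_eigenvalues_from_doublyRegular {d : ℕ} (hd : 3 ≤ d)
    (A : Matrix (Fin (2 * d)) (Fin (2 * d)) ℂ) (hA : IsTournament A)
    (S : Matrix (Fin (2 * d)) (Fin (2 * d)) ℂ) (hS : S = Complex.I • (A - Aᵀ))
    (θ φ : ℝ) (hφ : 0 < φ) (hφθ : φ < θ)
    (heig : ∀ μ : ℝ, eigSp S μ ≠ ⊥ ↔ (μ = -θ ∨ μ = -φ ∨ μ = φ ∨ μ = θ))
    (hm1 : eigMult S (-θ) = d - 1) (hm2 : eigMult S (-φ) = 1)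
    (hm3 : eigMult S φ = 1) (hm4 : eigMult S θ = d - 1)
    (hβ1 : mainAngle S (-θ) = 0) :
    Odd d ∧ ∃ B : Matrix (Fin (2 * d + 1)) (Fin (2 * d + 1)) ℂ,
      IsDoublyRegular B ∧ ∃ f : Fin (2 * d) ↪ Fin (2 * d + 1), B.submatrix f f = A :=
  type_one_four_eigenvalues_from_doublyRegular_general hd A hA S hS θ φ hφ hφθ heig hm2 hm3 hβ1
end

section
/- Let d be an even positive integer. If X is a complex spherical 2-code in Ω(d) with |X| = 2d and adjacency matrix A, then I + A − Aᵀ is a skew Hadamard matrix of order 2d. Conversely, if there exists a skew Hadamard matrix H of order 2d, then the tournament with adjacency matrix A = (H + J)/2 − I is representable in Ω(d), so there exists a complex spherical 2-code of size 2d in Ω(d). -/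
open Matrix
open scoped Classical

/-
A 2-code `X` of size `2d` in `Ω(d)` has Gram matrix `G = I + αA + ᾱAᵀ` of rank at most `d`.
Writing `α = a + bi` and `S = A - Aᵀ`, we get `G = (1 - a)I + aJ + biS`, so the kernels of `G`
and of `Gᵀ = Ḡ` inside `1^⊥` lie in the eigenspaces of `S` for `±μ`, `μ = (1 - a)i/b`, and have
dimension at least `d - 1`. Since `S` is skew, both eigenspaces lie in `U = 1^⊥ ∩ σ^⊥`,
`σ = S1`, which has dimension `2d - 2`; hence `S² = μ²` on `U`, and the symmetry of `S²` makes
`S² - μ²` a multiple of the projection onto `span {1, σ}`. Comparing diagonals with the constant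
diagonal `-(2d - 1)` of `S²`, either `S² = -(2d - 1)I`, i.e. `I + S` is skew Hadamard, or all
`σ x` have the same absolute value, which a parity count excludes when `d` is even.

Conversely, if `H = I + S` is skew Hadamard then `G = I + iS/√(2d - 1)` is Hermitian with
`G² = 2G` and rank `d`, so it is the Gram matrix of `2d` unit vectors of `ℂ^d`, which realize
the tournament with angle `i/√(2d - 1)`.
-/

open Module

theorem Finset.exists_int_sum_eq_of_eq_one_or_neg_one {ι R : Type*} [Ring R] (s : Finset ι)
    {f : ι → R} (hf : ∀ i ∈ s, f i = 1 ∨ f i = -1) :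
    ∃ k : ℤ, ∑ i ∈ s, f i = k ∧ (Odd k ↔ Odd s.card) := by
  classical
  induction s using Finset.induction_on with
  | empty => exact ⟨0, by simp⟩
  | insert a s ha ih =>
    obtain ⟨k, hk, hodd⟩ := ih fun i hi => hf i (Finset.mem_insert_of_mem hi)
    rw [Finset.sum_insert ha, Finset.card_insert_of_notMem ha, Nat.odd_add_one, hk, ← hodd,
      Int.not_odd_iff_even]
    rcases hf a (Finset.mem_insert_self a s) with h | h
    · exact ⟨1 + k, by simp [h], by rw [add_comm, odd_add_one]⟩
    · exact ⟨-1 + k, by simp [h], by rw [neg_add_eq_sub, odd_sub_one]⟩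

lemma add_eq_ite_of_eq_or_eq_neg {z r : ℂ} (hr : r ≠ 0) (hz : z = r ∨ z = -r) :
    z + r = if z = r then 2 * r else 0 := by
  rcases hz with rfl | rfl
  · rw [if_pos rfl]; ring
  · rw [if_neg fun h => hr (by linear_combination -h / 2)]; ring

lemma two_mul_card_filter_eq_of_sum_eq_zero {V : Type*} [Fintype V] {f : V → ℂ} {r : ℂ}
    (hr : r ≠ 0) (hf : ∀ x, f x = r ∨ f x = -r) (hsum : ∑ x, f x = 0) :
    2 * (Finset.univ.filter (f · = r)).card = Fintype.card V := by
  have h : 2 * r * (Finset.univ.filter (f · = r)).card = Fintype.card V * r :=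
    calc _ = ∑ x, (f x + r) := by
          simp only [fun x => add_eq_ite_of_eq_or_eq_neg hr (hf x), Finset.sum_ite,
            Finset.sum_const_zero, add_zero, Finset.sum_const, nsmul_eq_mul, mul_comm]
      _ = Fintype.card V * r := by simp [Finset.sum_add_distrib, hsum]
  have h' : ((2 * (Finset.univ.filter (f · = r)).card : ℕ) : ℂ) = Fintype.card V :=
    mul_right_cancel₀ hr (by push_cast; linear_combination h)
  exact_mod_cast h'

section DotKer

variable {V K : Type*} [Fintype V] [DecidableEq V] [Field K]

def dotKer (w : V → K) : Submodule K (V → K) := LinearMap.ker (dotProductEquiv K V w)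

@[simp]
lemma mem_dotKer {w v : V → K} : v ∈ dotKer w ↔ w ⬝ᵥ v = 0 := by
  simp [dotKer]

lemma finrank_dotKer_add_one {w : V → K} (hw : w ≠ 0) :
    finrank K (dotKer w) + 1 = Fintype.card V := by
  rw [dotKer, Dual.finrank_ker_add_one_of_ne_zero ((dotProductEquiv K V).map_ne_zero_iff.2 hw),
    finrank_fintype_fun_eq_card]

lemma card_le_rank_add_finrank_ker_inf_dotKer (M : Matrix V V K) {w : V → K} (hw : w ≠ 0) :
    Fintype.card V ≤ M.rank + finrank K ↥(LinearMap.ker M.mulVecLin ⊓ dotKer w) + 1 := by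
  have hnull := LinearMap.finrank_range_add_finrank_ker M.mulVecLin
  have hsup := Submodule.finrank_sup_add_finrank_inf_eq (LinearMap.ker M.mulVecLin) (dotKer w)
  have hle := Submodule.finrank_le (LinearMap.ker M.mulVecLin ⊔ dotKer w)
  rw [finrank_fintype_fun_eq_card] at hnull hle
  have := finrank_dotKer_add_one hw
  rw [Matrix.rank]
  omega

lemma finrank_dotKer_inf_add_two_le {w₁ w₂ : V → K} (h₁ : w₁ ⬝ᵥ w₁ ≠ 0) (h₂ : w₂ ⬝ᵥ w₂ ≠ 0)
    (h₁₂ : w₁ ⬝ᵥ w₂ = 0) :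
    finrank K ↥(dotKer w₁ ⊓ dotKer w₂) + 2 ≤ Fintype.card V := by
  have hzero : ∀ s t : K, s • w₁ + t • w₂ ∈ dotKer w₁ ⊓ dotKer w₂ → s = 0 ∧ t = 0 := by
    intro s t h
    simp only [Submodule.mem_inf, mem_dotKer, dotProduct_add, dotProduct_smul, smul_eq_mul,
      h₁₂, dotProduct_comm w₂ w₁] at h
    simp_all
  have hli : LinearIndependent K ![w₁, w₂] :=
    LinearIndependent.pair_iff.2 fun s t h => hzero s t (h ▸ Submodule.zero_mem _)
  have hdisj : dotKer w₁ ⊓ dotKer w₂ ⊓ Submodule.span K (Set.range ![w₁, w₂]) = ⊥ := by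
    rw [Matrix.range_cons_cons_empty, eq_bot_iff]
    rintro v ⟨hv, hspan⟩
    obtain ⟨s, t, rfl⟩ := Submodule.mem_span_pair.1 hspan
    obtain ⟨rfl, rfl⟩ := hzero s t hv
    simp
  have hsup := Submodule.finrank_sup_add_finrank_inf_eq (dotKer w₁ ⊓ dotKer w₂)
    (Submodule.span K (Set.range ![w₁, w₂]))
  rw [hdisj, finrank_bot, finrank_span_eq_card hli, Fintype.card_fin] at hsup
  have hle := Submodule.finrank_le
    (dotKer w₁ ⊓ dotKer w₂ ⊔ Submodule.span K (Set.range ![w₁, w₂]))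
  rw [finrank_fintype_fun_eq_card] at hle
  omega

end DotKer

section Skew

variable {V : Type*} [Fintype V] {S : Matrix V V ℂ}

lemma mulVec_dotProduct_of_transpose_eq_neg (hS : Sᵀ = -S) (u v : V → ℂ) :
    S *ᵥ u ⬝ᵥ v = -(u ⬝ᵥ S *ᵥ v) := by
  rw [← vecMul_transpose, ← dotProduct_mulVec, hS, neg_mulVec, dotProduct_neg]

lemma dotProduct_mulVec_self_of_transpose_eq_neg (hS : Sᵀ = -S) (v : V → ℂ) :
    v ⬝ᵥ S *ᵥ v = 0 := by
  have h := mulVec_dotProduct_of_transpose_eq_neg hS v v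
  rw [dotProduct_comm] at h
  linear_combination h / 2

lemma sum_filter_mulVec_one_eq_zero (hS : Sᵀ = -S) {r c : ℂ} (hr : r ≠ 0)
    (hpm : ∀ y, (S *ᵥ 1) y = r ∨ (S *ᵥ 1) y = -r) (hc : S *ᵥ (S *ᵥ 1) = c • 1) {x : V}
    (hx : (S *ᵥ 1) x = r) : ∑ y ∈ Finset.univ.filter ((S *ᵥ 1) · = r), S x y = 0 := by
  set σ := S *ᵥ 1
  have hn : (Fintype.card V : ℂ) ≠ 0 := Nat.cast_ne_zero.2 (Fintype.card_pos_iff.2 ⟨x⟩).ne'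
  have hcr : c = -r ^ 2 := by
    have h := mulVec_dotProduct_of_transpose_eq_neg hS 1 σ
    have hσσ : σ ⬝ᵥ σ = Fintype.card V * r ^ 2 := by
      simp only [dotProduct, ← sq, fun y => (sq_eq_sq_iff_eq_or_eq_neg.2 (hpm y)),
        Finset.sum_const, Finset.card_univ, nsmul_eq_mul]
    have h11 : (1 : V → ℂ) ⬝ᵥ 1 = Fintype.card V := by simp
    rw [hσσ, hc, dotProduct_smul, h11, smul_eq_mul] at h
    exact mul_left_cancel₀ hn (by linear_combination h)
  have h : ∑ y, S x y * (σ y + r) = 2 * r * ∑ y ∈ Finset.univ.filter (σ · = r), S x y := by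
    simp only [fun y => add_eq_ite_of_eq_or_eq_neg hr (hpm y), mul_ite, mul_zero,
      Finset.sum_ite, Finset.sum_const_zero, add_zero, Finset.mul_sum]
    exact Finset.sum_congr rfl fun y _ => by ring
  have h' : ∑ y, S x y * (σ y + r) = 0 := by
    have e1 : ∑ y, S x y * σ y = c := by simpa [mulVec, dotProduct] using congrFun hc x
    have e2 : ∑ y, S x y = r := by simpa [σ, mulVec, dotProduct] using hx
    rw [Finset.sum_congr rfl fun y _ => mul_add _ _ _, Finset.sum_add_distrib, ← Finset.sum_mul,
      e1, e2, hcr]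
    ring
  exact (mul_eq_zero.1 (h ▸ h')).resolve_left (mul_ne_zero two_ne_zero hr)

/-- The projection onto `span {1, σ}` along `dotKer 1 ⊓ dotKer σ`, when `1 ⬝ᵥ σ = 0`. -/
noncomputable def pairProj (σ : V → ℂ) : Matrix V V ℂ :=
  (Fintype.card V : ℂ)⁻¹ • vecMulVec 1 1 + (σ ⬝ᵥ σ)⁻¹ • vecMulVec σ σ

lemma pairProj_mulVec (σ v : V → ℂ) :
    pairProj σ *ᵥ v =
      ((Fintype.card V : ℂ)⁻¹ * (1 ⬝ᵥ v)) • 1 + ((σ ⬝ᵥ σ)⁻¹ * (σ ⬝ᵥ v)) • σ := by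
  simp only [pairProj, add_mulVec, smul_mulVec, vecMulVec_mulVec, op_smul_eq_smul, smul_smul]

lemma transpose_pairProj (σ : V → ℂ) : (pairProj σ)ᵀ = pairProj σ := by
  simp only [pairProj, transpose_add, transpose_smul, transpose_vecMulVec]

lemma pairProj_mulVec_one [Nonempty V] {σ : V → ℂ} (h1σ : 1 ⬝ᵥ σ = 0) :
    pairProj σ *ᵥ 1 = 1 := by
  have hn : (Fintype.card V : ℂ) ≠ 0 := by simp
  rw [pairProj_mulVec, dotProduct_comm σ 1, h1σ, mul_zero, zero_smul, add_zero]
  simp [hn]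

variable [DecidableEq V]

lemma sub_pairProj_mulVec_mem [Nonempty V] {σ : V → ℂ} (h1σ : 1 ⬝ᵥ σ = 0) (hσσ : σ ⬝ᵥ σ ≠ 0)
    (v : V → ℂ) : v - pairProj σ *ᵥ v ∈ dotKer 1 ⊓ dotKer σ := by
  have hn : (Fintype.card V : ℂ) ≠ 0 := by simp
  have h11 : (1 : V → ℂ) ⬝ᵥ 1 = Fintype.card V := by simp
  simp only [Submodule.mem_inf, mem_dotKer, pairProj_mulVec, dotProduct_sub, dotProduct_add,
    dotProduct_smul, h11, h1σ, dotProduct_comm σ 1, smul_eq_mul]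
  constructor <;> field_simp <;> ring

lemma eigenspace_inf_dotKer_one_le (hS : Sᵀ = -S) (μ : ℂ) :
    End.eigenspace S.toLin' μ ⊓ dotKer 1 ≤ dotKer 1 ⊓ dotKer (S *ᵥ 1) := by
  intro v hv
  rw [Submodule.mem_inf, End.mem_eigenspace_iff, toLin'_apply, mem_dotKer] at hv
  obtain ⟨hv, hv1⟩ := hv
  rw [Submodule.mem_inf, mem_dotKer, mem_dotKer, mulVec_dotProduct_of_transpose_eq_neg hS, hv,
    dotProduct_smul, hv1, smul_zero, neg_zero]
  exact ⟨rfl, rfl⟩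

lemma mulVec_mulVec_eq_sq_smul_of_mem_dotKer [Nonempty V] (hS : Sᵀ = -S) {μ : ℂ} (hμ : μ ≠ 0)
    (hσ : S *ᵥ 1 ⬝ᵥ S *ᵥ 1 ≠ 0)
    (hdim : Fintype.card V ≤ finrank ℂ ↥(End.eigenspace S.toLin' μ ⊓ dotKer 1) +
      finrank ℂ ↥(End.eigenspace S.toLin' (-μ) ⊓ dotKer 1) + 2)
    {u : V → ℂ} (hu : u ∈ dotKer 1 ⊓ dotKer (S *ᵥ 1)) : S *ᵥ (S *ᵥ u) = μ ^ 2 • u := by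
  set E₁ := End.eigenspace S.toLin' μ ⊓ dotKer 1
  set E₂ := End.eigenspace S.toLin' (-μ) ⊓ dotKer 1
  have hdisj : E₁ ⊓ E₂ = ⊥ := disjoint_iff.1 <|
    ((End.eigenspaces_iSupIndep _).pairwiseDisjoint (by simpa [eq_neg_iff_add_eq_zero, ← two_mul]
      using hμ : μ ≠ -μ)).mono inf_le_left inf_le_left
  have hU := finrank_dotKer_inf_add_two_le (w₁ := (1 : V → ℂ)) (by simp) hσ
    (dotProduct_mulVec_self_of_transpose_eq_neg hS 1)
  have hsup := Submodule.finrank_sup_add_finrank_inf_eq E₁ E₂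
  rw [hdisj, finrank_bot] at hsup
  have hEU : E₁ ⊔ E₂ = dotKer 1 ⊓ dotKer (S *ᵥ 1) :=
    Submodule.eq_of_le_of_finrank_le
      (sup_le (eigenspace_inf_dotKer_one_le hS μ) (eigenspace_inf_dotKer_one_le hS (-μ)))
      (by omega)
  rw [← hEU] at hu
  obtain ⟨x, ⟨hx, -⟩, y, ⟨hy, -⟩, rfl⟩ := Submodule.mem_sup.1 hu
  rw [SetLike.mem_coe, End.mem_eigenspace_iff, toLin'_apply] at hx hy
  simp only [mulVec_add, hx, hy, mulVec_smul, smul_smul, smul_add]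
  ring_nf

lemma mul_self_sub_smul_mul_pairProj [Nonempty V] (hS : Sᵀ = -S) {σ : V → ℂ}
    (hσ : S *ᵥ 1 = σ) (hσσ : σ ⬝ᵥ σ ≠ 0) {c : ℂ}
    (hU : ∀ u ∈ dotKer 1 ⊓ dotKer σ, S *ᵥ (S *ᵥ u) = c • u) :
    (S * S - c • 1) * pairProj σ = S * S - c • 1 := by
  have h1σ : (1 : V → ℂ) ⬝ᵥ σ = 0 := hσ ▸ dotProduct_mulVec_self_of_transpose_eq_neg hS 1
  refine ext_iff_mulVec.2 fun v => ?_
  rw [← mulVec_mulVec, eq_comm, ← sub_eq_zero, ← mulVec_sub, sub_mulVec, smul_mulVec,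
    one_mulVec, ← mulVec_mulVec, hU _ (sub_pairProj_mulVec_mem h1σ hσσ v), sub_self]

lemma mul_self_sub_smul_eq_smul_pairProj [Nonempty V] (hS : Sᵀ = -S) {σ : V → ℂ}
    (hσ : S *ᵥ 1 = σ) (hσσ : σ ⬝ᵥ σ ≠ 0) {c : ℂ}
    (hU : ∀ u ∈ dotKer 1 ⊓ dotKer σ, S *ᵥ (S *ᵥ u) = c • u) :
    S * S - c • 1 = -(σ ⬝ᵥ σ / Fintype.card V + c) • pairProj σ := by
  have hn : (Fintype.card V : ℂ) ≠ 0 := by simp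
  have h11 : (1 : V → ℂ) ⬝ᵥ 1 = Fintype.card V := by simp
  have h1σ : (1 : V → ℂ) ⬝ᵥ σ = 0 := hσ ▸ dotProduct_mulVec_self_of_transpose_eq_neg hS 1
  have hQP := mul_self_sub_smul_mul_pairProj hS hσ hσσ hU
  set Q := S * S - c • 1
  have hQv : ∀ v, Q *ᵥ v = S *ᵥ (S *ᵥ v) - c • v := fun v => by
    simp only [Q, sub_mulVec, smul_mulVec, one_mulVec, mulVec_mulVec]
  -- `Q` is symmetric, so it also absorbs the projection from the left
  have hPQ : pairProj σ * Q = Q := by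
    have hQt : Qᵀ = Q := by
      simp only [Q, transpose_sub, transpose_mul, hS, neg_mul_neg, transpose_smul, transpose_one]
    simpa only [transpose_mul, hQt, transpose_pairProj] using congrArg transpose hQP
  set κ := -(σ ⬝ᵥ σ / Fintype.card V + c)
  have hQ1 : Q *ᵥ 1 = κ • 1 := by
    have h1 : (1 : V → ℂ) ⬝ᵥ Q *ᵥ 1 = -(σ ⬝ᵥ σ) - c * Fintype.card V := by
      rw [hQv, hσ, dotProduct_sub, dotProduct_smul, h11, smul_eq_mul, ← neg_neg (1 ⬝ᵥ S *ᵥ σ),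
        ← mulVec_dotProduct_of_transpose_eq_neg hS, hσ]
    have hσ1 : σ ⬝ᵥ Q *ᵥ 1 = 0 := by
      rw [hQv, hσ, dotProduct_sub, dotProduct_smul, dotProduct_mulVec_self_of_transpose_eq_neg hS,
        dotProduct_comm, h1σ, smul_zero, sub_zero]
    rw [← hPQ, ← mulVec_mulVec, pairProj_mulVec, h1, hσ1, mul_zero, zero_smul, add_zero]
    congr 1
    simp only [κ]
    field_simp
    ring
  have hQσ : Q *ᵥ σ = κ • σ := by
    rw [← hσ, hQv, ← mulVec_smul, ← mulVec_sub, ← hQv, hQ1, mulVec_smul]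
  calc Q = Q * pairProj σ := hQP.symm
    _ = κ • pairProj σ := by
      simp only [pairProj, Matrix.mul_add, Matrix.mul_smul, mul_vecMulVec, hQ1, hQσ,
        smul_vecMulVec, smul_add, smul_comm κ]

end Skew

namespace IsTournament

variable {V : Type*} [Fintype V] [DecidableEq V] {A : Matrix V V ℂ}

lemma apply_self (hA : IsTournament A) (x : V) : A x x = 0 := by
  have h := congrFun (congrFun hA.2 x) x
  simp only [Matrix.add_apply, transpose_apply, Matrix.sub_apply, of_apply, one_apply_eq,
    sub_self] at h
  linear_combination h / 2

lemma add_apply_swap (hA : IsTournament A) {x y : V} (hxy : x ≠ y) : A x y + A y x = 1 := by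
  simpa [one_apply_ne hxy] using congrFun (congrFun hA.2 x) y

lemma apply_eq_one_or_swap (hA : IsTournament A) {x y : V} (hxy : x ≠ y) :
    A x y = 1 ∧ A y x = 0 ∨ A x y = 0 ∧ A y x = 1 := by
  have h := hA.add_apply_swap hxy
  rcases hA.1 x y with h0 | h1
  · exact .inr ⟨h0, by rwa [h0, zero_add] at h⟩
  · exact .inl ⟨h1, by linear_combination h - h1⟩

lemma conjTranspose_eq (hA : IsTournament A) : Aᴴ = Aᵀ := by
  ext i j
  rcases hA.1 j i with h | h <;> simp [h]

lemma sub_transpose_apply (hA : IsTournament A) {x y : V} (hxy : x ≠ y) :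
    (A - Aᵀ) x y = 1 ∨ (A - Aᵀ) x y = -1 := by
  rcases hA.apply_eq_one_or_swap hxy with ⟨h1, h2⟩ | ⟨h1, h2⟩ <;> simp [h1, h2]

lemma sub_transpose_mul_self_apply_self (hA : IsTournament A) (x : V) :
    ((A - Aᵀ) * (A - Aᵀ)) x x = -((Fintype.card V : ℂ) - 1) := by
  have hsq : ∀ y ∈ Finset.univ.erase x, (A - Aᵀ) x y * (A - Aᵀ) y x = -1 := fun y hy => by
    rw [show (A - Aᵀ) y x = -(A - Aᵀ) x y by simp]
    rcases hA.sub_transpose_apply (Finset.ne_of_mem_erase hy).symm with h | h <;> simp [h]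
  rw [mul_apply, ← Finset.add_sum_erase _ _ (Finset.mem_univ x), Finset.sum_congr rfl hsq]
  simp [Finset.card_erase_of_mem, Nat.cast_pred (Fintype.card_pos_iff.2 ⟨x⟩)]

lemma exists_odd_sub_transpose_mulVec_one (hA : IsTournament A) (hV : Even (Fintype.card V))
    (x : V) : ∃ k : ℤ, Odd k ∧ ((A - Aᵀ) *ᵥ 1) x = k := by
  obtain ⟨k, hk, hodd⟩ := (Finset.univ.erase x).exists_int_sum_eq_of_eq_one_or_neg_one
    fun y hy => hA.sub_transpose_apply (Finset.ne_of_mem_erase hy).symm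
  refine ⟨k, hodd.2 ?_, ?_⟩
  · rw [Finset.card_erase_of_mem (Finset.mem_univ x), Finset.card_univ]
    exact Nat.Even.sub_odd (Fintype.card_pos_iff.2 ⟨x⟩) hV odd_one
  · rw [← hk, mulVec, dotProduct, ← Finset.add_sum_erase _ _ (Finset.mem_univ x)]
    simp

lemma sub_transpose_mulVec_one_apply_ne_zero (hA : IsTournament A) (hV : Even (Fintype.card V))
    (x : V) : ((A - Aᵀ) *ᵥ 1) x ≠ 0 := by
  obtain ⟨k, hk, hx⟩ := hA.exists_odd_sub_transpose_mulVec_one hV x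
  rw [hx, Int.cast_ne_zero]
  rintro rfl
  simp at hk

lemma sub_transpose_mulVec_one_dotProduct_self_ne_zero [Nonempty V] (hA : IsTournament A)
    (hV : Even (Fintype.card V)) : (A - Aᵀ) *ᵥ 1 ⬝ᵥ (A - Aᵀ) *ᵥ 1 ≠ 0 := by
  choose k hk hx using hA.exists_odd_sub_transpose_mulVec_one hV
  have hpos : 0 < ∑ x, k x ^ 2 := Finset.sum_pos
    (fun x _ => pow_two_pos_of_ne_zero fun h => by simpa [h] using hk x) Finset.univ_nonempty
  have hcast : (A - Aᵀ) *ᵥ 1 ⬝ᵥ (A - Aᵀ) *ᵥ 1 = ((∑ x, k x ^ 2 : ℤ) : ℂ) := by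
    simp [dotProduct, hx, sq]
  rw [hcast]
  exact_mod_cast hpos.ne'

lemma not_forall_sq_sub_transpose_mulVec_one_eq [Nonempty V] (hA : IsTournament A) {d : ℕ}
    (hcard : Fintype.card V = 2 * d) (heven : Even d) {c : ℂ}
    (hc : (A - Aᵀ) *ᵥ ((A - Aᵀ) *ᵥ 1) = c • 1) :
    ¬ ∀ x y, ((A - Aᵀ) *ᵥ 1) x ^ 2 = ((A - Aᵀ) *ᵥ 1) y ^ 2 := by
  intro hsq
  set σ := (A - Aᵀ) *ᵥ 1
  have hS : (A - Aᵀ)ᵀ = -(A - Aᵀ) := by simp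
  have hV : Even (Fintype.card V) := hcard ▸ even_two_mul d
  obtain ⟨x₀⟩ := ‹Nonempty V›
  have hr : σ x₀ ≠ 0 := hA.sub_transpose_mulVec_one_apply_ne_zero hV x₀
  have hpm : ∀ y, σ y = σ x₀ ∨ σ y = -σ x₀ := fun y => sq_eq_sq_iff_eq_or_eq_neg.1 (hsq y x₀)
  set T := Finset.univ.filter (σ · = σ x₀)
  have hT : 2 * T.card = 2 * d := by
    rw [← hcard]
    convert two_mul_card_filter_eq_of_sum_eq_zero hr hpm
      (by simpa [dotProduct] using dotProduct_mulVec_self_of_transpose_eq_neg hS 1)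
  have hx₀T : x₀ ∈ T := by simp [T]
  -- the entries `± 1` of row `x₀` over the `d - 1` other points of `T` cannot sum to zero
  obtain ⟨k, hk, hodd⟩ := (T.erase x₀).exists_int_sum_eq_of_eq_one_or_neg_one (f := (A - Aᵀ) x₀)
    fun y hy => hA.sub_transpose_apply (Finset.ne_of_mem_erase hy).symm
  have hk_odd : Odd k := hodd.2 <| by
    rw [Finset.card_erase_of_mem hx₀T, (by omega : T.card = d)]
    exact Nat.Even.sub_odd (by have := Fintype.card_pos (α := V); omega) heven odd_one
  have hrow := sum_filter_mulVec_one_eq_zero hS hr hpm hc rfl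
  rw [← Finset.sum_erase_add _ _ hx₀T, hk] at hrow
  simp only [Matrix.sub_apply, transpose_apply, sub_self, add_zero, Int.cast_eq_zero] at hrow
  simp [hrow] at hk_odd

lemma sub_transpose_mul_self_eq_of_eq_smul_pairProj [Nonempty V] (hA : IsTournament A) {d : ℕ}
    (hcard : Fintype.card V = 2 * d) (heven : Even d) {c κ : ℂ}
    (h : (A - Aᵀ) * (A - Aᵀ) - c • 1 = κ • pairProj ((A - Aᵀ) *ᵥ 1)) :
    (A - Aᵀ) * (A - Aᵀ) = -((Fintype.card V : ℂ) - 1) • 1 := by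
  set σ := (A - Aᵀ) *ᵥ 1
  have hdiag : ∀ x, -((Fintype.card V : ℂ) - 1) - c =
      κ * ((Fintype.card V : ℂ)⁻¹ + (σ ⬝ᵥ σ)⁻¹ * σ x ^ 2) := fun x => by
    have hx := congrFun (congrFun h x) x
    rw [Matrix.sub_apply, hA.sub_transpose_mul_self_apply_self] at hx
    simp only [pairProj, Matrix.smul_apply, one_apply_eq, Matrix.add_apply, vecMulVec_apply,
      smul_eq_mul, mul_one, Pi.one_apply] at hx
    linear_combination hx
  obtain ⟨x₀⟩ := ‹Nonempty V›
  by_cases hκ : κ = 0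
  · have hc := hdiag x₀
    rw [hκ, zero_mul] at hc
    rw [hκ, zero_smul, sub_eq_zero] at h
    rw [h, show c = -((Fintype.card V : ℂ) - 1) by linear_combination -hc]
  · exfalso
    have hσσ : σ ⬝ᵥ σ ≠ 0 :=
      hA.sub_transpose_mulVec_one_dotProduct_self_ne_zero (hcard ▸ even_two_mul d)
    have h1σ : (1 : V → ℂ) ⬝ᵥ σ = 0 := dotProduct_mulVec_self_of_transpose_eq_neg (by simp) 1
    have hσ1 : (A - Aᵀ) *ᵥ σ = (c + κ) • 1 := by
      have h1 := congrArg (· *ᵥ (1 : V → ℂ)) h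
      rw [sub_mulVec ((A - Aᵀ) * (A - Aᵀ)), ← mulVec_mulVec, smul_mulVec, one_mulVec,
        smul_mulVec, pairProj_mulVec_one h1σ, sub_eq_iff_eq_add] at h1
      rw [h1, add_smul, add_comm]
    refine hA.not_forall_sq_sub_transpose_mulVec_one_eq hcard heven hσ1 fun x y => ?_
    have hxy := (hdiag x).symm.trans (hdiag y)
    rwa [mul_right_inj' hκ, add_right_inj, mul_right_inj' (inv_ne_zero hσσ)] at hxy

end IsTournament

section TournamentGram

variable {V : Type*} [DecidableEq V]

def tournamentGram (A : Matrix V V ℂ) (α : ℂ) : Matrix V V ℂ :=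
  1 + α • A + starRingEnd ℂ α • Aᵀ

lemma tournamentGram_transpose (A : Matrix V V ℂ) (α : ℂ) :
    (tournamentGram A α)ᵀ = tournamentGram A (starRingEnd ℂ α) := by
  simp only [tournamentGram, transpose_add, transpose_one, transpose_smul, transpose_transpose,
    Complex.conj_conj]
  abel

namespace IsTournament

variable [Fintype V] {A : Matrix V V ℂ}

lemma tournamentGram_eq (hA : IsTournament A) (α : ℂ) :
    tournamentGram A α = (1 - α.re : ℂ) • 1 + (α.re : ℂ) • of (fun _ _ => 1) +
      (α.im * Complex.I) • (A - Aᵀ) := by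
  ext i j
  have h := congrFun (congrFun hA.2 i) j
  have hα : α = α.re + α.im * Complex.I := (Complex.re_add_im α).symm
  have hα' : starRingEnd ℂ α = α.re - α.im * Complex.I := by
    apply Complex.ext <;> simp
  simp only [tournamentGram, Matrix.add_apply, Matrix.smul_apply, transpose_apply, smul_eq_mul,
    Matrix.sub_apply, of_apply] at h ⊢
  linear_combination (α.re : ℂ) * h + A i j * hα + A j i * hα'

lemma tournamentGram_apply_self (hA : IsTournament A) (α : ℂ) (x : V) :
    tournamentGram A α x x = 1 := by
  simp [tournamentGram, hA.apply_self]

lemma tournamentGram_apply_of_apply_eq_one (hA : IsTournament A) (α : ℂ) {x y : V}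
    (hxy : x ≠ y) (h : A x y = 1) : tournamentGram A α x y = α := by
  have h' : A y x = 0 := by linear_combination hA.add_apply_swap hxy - h
  simp [tournamentGram, one_apply_ne hxy, h, h']

lemma tournamentGram_apply_of_apply_swap_eq_one (hA : IsTournament A) (α : ℂ) {x y : V}
    (hxy : x ≠ y) (h : A y x = 1) : tournamentGram A α x y = starRingEnd ℂ α := by
  have h' : A x y = 0 := by linear_combination hA.add_apply_swap hxy - h
  simp [tournamentGram, one_apply_ne hxy, h, h']

lemma ker_tournamentGram_inf_le (hA : IsTournament A) {α : ℂ} (hα : α.im ≠ 0) :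
    LinearMap.ker (tournamentGram A α).mulVecLin ⊓ dotKer 1 ≤
      End.eigenspace (A - Aᵀ).toLin' ((1 - α.re) / α.im * Complex.I) ⊓ dotKer 1 := by
  intro v hv
  rw [Submodule.mem_inf, LinearMap.mem_ker, mulVecLin_apply, mem_dotKer] at hv
  obtain ⟨hv, hv1⟩ := hv
  refine Submodule.mem_inf.2 ⟨?_, mem_dotKer.2 hv1⟩
  rw [End.mem_eigenspace_iff, toLin'_apply]
  ext x
  have hJ : (of fun _ _ => (1 : ℂ) : Matrix V V ℂ) *ᵥ v = 0 := funext fun _ => by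
    simpa [mulVec, dotProduct] using hv1
  have h := congrFun hv x
  rw [hA.tournamentGram_eq, add_mulVec, add_mulVec, smul_mulVec, smul_mulVec, smul_mulVec, hJ,
    one_mulVec] at h
  simp only [Pi.add_apply, Pi.smul_apply, smul_eq_mul, Pi.zero_apply, mul_zero, add_zero] at h
  have him : (α.im : ℂ) ≠ 0 := by exact_mod_cast hα
  simp only [Pi.smul_apply, smul_eq_mul]
  field_simp
  linear_combination (-Complex.I) * h + α.im * ((A - Aᵀ) *ᵥ v) x * Complex.I_sq

theorem sub_transpose_mul_self_eq_of_rank_le (hA : IsTournament A) {d : ℕ}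
    (hcard : Fintype.card V = 2 * d) (heven : Even d) {α : ℂ} (him : α.im ≠ 0)
    (hre : α.re ≠ 1) (hrank : (tournamentGram A α).rank ≤ d) :
    (A - Aᵀ) * (A - Aᵀ) = -((Fintype.card V : ℂ) - 1) • 1 := by
  rcases isEmpty_or_nonempty V with hV | hV
  · exact Subsingleton.elim _ _
  have hS : (A - Aᵀ)ᵀ = -(A - Aᵀ) := by simp
  have hσσ := hA.sub_transpose_mulVec_one_dotProduct_self_ne_zero (hcard ▸ even_two_mul d)
  have hK₁ := Submodule.finrank_mono (hA.ker_tournamentGram_inf_le him)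
  have hK₂ := Submodule.finrank_mono (hA.ker_tournamentGram_inf_le (α := starRingEnd ℂ α)
    (by simpa using him))
  set μ := (1 - α.re) / α.im * Complex.I
  have hμ : μ ≠ 0 := mul_ne_zero (div_ne_zero (sub_ne_zero.2 (by exact_mod_cast hre.symm))
    (by exact_mod_cast him)) Complex.I_ne_zero
  rw [show (1 - (starRingEnd ℂ α).re) / (starRingEnd ℂ α).im * Complex.I = -μ by
    simp [μ, div_neg, neg_mul]] at hK₂
  have h₁ := card_le_rank_add_finrank_ker_inf_dotKer (tournamentGram A α) one_ne_zero
  have h₂ := card_le_rank_add_finrank_ker_inf_dotKer (tournamentGram A (starRingEnd ℂ α))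
    one_ne_zero
  rw [← tournamentGram_transpose, rank_transpose, tournamentGram_transpose] at h₂
  exact hA.sub_transpose_mul_self_eq_of_eq_smul_pairProj hcard heven <|
    mul_self_sub_smul_eq_smul_pairProj hS rfl hσσ fun u hu =>
      mulVec_mulVec_eq_sq_smul_of_mem_dotKer hS hμ hσσ (by omega) hu

end IsTournament

end TournamentGram

namespace IsTournament

variable {V : Type*} [Fintype V] [DecidableEq V] {A : Matrix V V ℂ}

lemma isSkewHadamard_one_add_sub_transpose (hA : IsTournament A)
    (h : (A - Aᵀ) * (A - Aᵀ) = -((Fintype.card V : ℂ) - 1) • 1) :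
    IsSkewHadamard (1 + A - Aᵀ) := by
  refine ⟨fun x y => ?_, ?_, ?_⟩
  · rcases eq_or_ne x y with rfl | hxy
    · simp [hA.apply_self]
    · rcases hA.sub_transpose_apply hxy with h | h <;>
        simp_all [one_apply_ne hxy]
  · simp only [transpose_sub, transpose_add, transpose_one, transpose_transpose, two_smul]
    abel
  · have : (1 + A - Aᵀ) * (1 + A - Aᵀ)ᵀ = 1 - (A - Aᵀ) * (A - Aᵀ) := by
      simp only [transpose_sub, transpose_add, transpose_one, transpose_transpose]
      noncomm_ring
    rw [this, h, neg_smul, sub_neg_eq_add, sub_smul, one_smul]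
    abel

end IsTournament

namespace IsSkewHadamard

variable {V : Type*} [Fintype V] [DecidableEq V] {H : Matrix V V ℂ}

lemma apply_self (hH : IsSkewHadamard H) (x : V) : H x x = 1 := by
  have h := congrFun (congrFun hH.2.1 x) x
  simp at h
  linear_combination h / 2

lemma isTournament (hH : IsSkewHadamard H) :
    IsTournament ((1 / 2 : ℂ) • (H + of fun _ _ => 1) - 1) := by
  refine ⟨fun x y => ?_, ?_⟩
  · rcases eq_or_ne x y with rfl | hxy
    · left; norm_num [hH.apply_self]
    · rcases hH.1 x y with h | h <;> norm_num [h, one_apply_ne hxy]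
  · ext i j
    have h := congrFun (congrFun hH.2.1 i) j
    simp only [Matrix.add_apply, transpose_apply, Matrix.smul_apply, Matrix.sub_apply, of_apply,
      smul_eq_mul] at h ⊢
    have h1 : (1 : Matrix V V ℂ) j i = (1 : Matrix V V ℂ) i j := by simp [one_apply, eq_comm]
    linear_combination h / 2 - h1

lemma sub_transpose (hH : IsSkewHadamard H) :
    ((1 / 2 : ℂ) • (H + of fun _ _ => 1) - 1) - ((1 / 2 : ℂ) • (H + of fun _ _ => 1) - 1)ᵀ =
      H - 1 := by
  ext i j
  have h := congrFun (congrFun hH.2.1 i) j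
  simp only [Matrix.add_apply, transpose_apply, Matrix.smul_apply, Matrix.sub_apply, of_apply,
    smul_eq_mul] at h ⊢
  have h1 : (1 : Matrix V V ℂ) j i = (1 : Matrix V V ℂ) i j := by simp [one_apply, eq_comm]
  linear_combination -h / 2 + h1

lemma sub_one_mul_self (hH : IsSkewHadamard H) :
    (H - 1) * (H - 1) = -((Fintype.card V : ℂ) - 1) • 1 := by
  have h := hH.2.2
  rw [eq_sub_of_add_eq' hH.2.1] at h
  rw [Matrix.mul_sub, Matrix.mul_smul, Matrix.mul_one] at h
  calc (H - 1) * (H - 1) = 1 - ((2 : ℂ) • H - H * H) := by rw [two_smul]; noncomm_ring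
    _ = -((Fintype.card V : ℂ) - 1) • 1 := by rw [h, neg_smul, sub_smul, one_smul]; abel

end IsSkewHadamard

section Realization

lemma Matrix.rank_add_rank_one_sub_of_isIdempotentElem {n K : Type*} [Fintype n] [DecidableEq n]
    [Field K] {P : Matrix n n K} (hP : IsIdempotentElem P) :
    P.rank + (1 - P).rank = Fintype.card n := by
  have hker : LinearMap.ker P.mulVecLin = LinearMap.range (1 - P).mulVecLin := by
    refine le_antisymm (fun v hv => ⟨v, ?_⟩) ?_
    · rintro _ ⟨w, rfl⟩
      rw [LinearMap.mem_ker, mulVecLin_apply, mulVecLin_apply, mulVec_mulVec, Matrix.mul_sub,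
        Matrix.mul_one, hP.eq, sub_self, zero_mulVec]
    · rw [LinearMap.mem_ker, mulVecLin_apply] at hv
      simp [hv]
  have := LinearMap.finrank_range_add_finrank_ker P.mulVecLin
  rwa [hker, finrank_fintype_fun_eq_card] at this

variable {𝕜 : Type*} [RCLike 𝕜]

lemma rank_gram_le {ι E : Type*} [Fintype ι] [NormedAddCommGroup E] [InnerProductSpace 𝕜 E]
    [FiniteDimensional 𝕜 E] (v : ι → E) : (gram 𝕜 v).rank ≤ finrank 𝕜 E := by
  rw [gram_eq_conjTranspose_mul (stdOrthonormalBasis 𝕜 E)]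
  exact (rank_mul_le_right _ _).trans ((rank_le_card_height _).trans (Fintype.card_fin _).le)

lemma exists_gram_eq_conjTranspose_mul {m ι : Type*} [Fintype m] [Fintype ι] {d : ℕ}
    (B : Matrix m ι 𝕜) (hB : B.rank = d) :
    ∃ φ : ι → EuclideanSpace 𝕜 (Fin d), gram 𝕜 φ = Bᴴ * B := by
  let col : ι → EuclideanSpace 𝕜 m := fun x => WithLp.toLp 2 (B.col x)
  let W := Submodule.span 𝕜 (Set.range col)
  have hW : finrank 𝕜 W = d := by
    rw [← hB, rank_eq_finrank_span_cols,
      ← LinearEquiv.finrank_map_eq (WithLp.linearEquiv 2 𝕜 (m → 𝕜)).symm, Submodule.map_span,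
      ← Set.range_comp]
    rfl
  let b := (stdOrthonormalBasis 𝕜 W).reindex (finCongr hW)
  refine ⟨fun x => b.repr ⟨col x, Submodule.subset_span ⟨x, rfl⟩⟩, ?_⟩
  ext x y
  rw [gram_apply, LinearIsometryEquiv.inner_map_map, Submodule.coe_inner, PiLp.inner_apply,
    mul_apply]
  simp [col, Matrix.col, mul_comm]

lemma exists_conjTranspose_mul_eq_one_add_smul {V : Type*} [Fintype V] [DecidableEq V]
    {S : Matrix V V ℂ} (hSt : Sᵀ = -S) (hSH : Sᴴ = -S) {β : ℂ} (hβ : starRingEnd ℂ β = -β)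
    (hS2 : β ^ 2 • (S * S) = 1) :
    ∃ B : Matrix V V ℂ, 2 * B.rank = Fintype.card V ∧ Bᴴ * B = 1 + β • S := by
  set P : Matrix V V ℂ := (1 / 2 : ℂ) • (1 + β • S)
  have hP : IsIdempotentElem P := by
    have : (1 + β • S) * (1 + β • S) = (2 : ℂ) • (1 + β • S) :=
      calc (1 + β • S) * (1 + β • S) = 1 + β • S + β • S + β ^ 2 • (S * S) := by
            simp only [add_mul, mul_add, one_mul, mul_one, Matrix.smul_mul, Matrix.mul_smul,
              smul_smul, sq]
            abel
        _ = (2 : ℂ) • (1 + β • S) := by rw [hS2, two_smul]; abel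
    simp only [IsIdempotentElem, P, Matrix.smul_mul, Matrix.mul_smul, smul_smul, this]
    norm_num
  have hPt : 1 - P = Pᵀ := by
    simp only [P, transpose_smul, transpose_add, transpose_one, hSt, smul_neg]
    module
  have hPH : Pᴴ = P := by
    simp [P, conjTranspose_smul, hSH, hβ]
  have hrank := Matrix.rank_add_rank_one_sub_of_isIdempotentElem hP
  rw [hPt, rank_transpose, ← two_mul] at hrank
  refine ⟨(Real.sqrt 2 : ℂ) • P, ?_, ?_⟩
  · rwa [rank_smul_of_mem_nonZeroDivisors _ (mem_nonZeroDivisors_of_ne_zero (by simp))]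
  · rw [conjTranspose_smul, hPH, Matrix.smul_mul, Matrix.mul_smul, smul_smul, hP.eq]
    have h2 : star (Real.sqrt 2 : ℂ) * Real.sqrt 2 = 2 := by
      rw [RCLike.star_def, Complex.conj_ofReal, ← Complex.ofReal_mul,
        Real.mul_self_sqrt zero_le_two, Complex.ofReal_ofNat]
    rw [h2, smul_smul]
    norm_num

end Realization

lemma IsTournament.isRepresentation_of_gram_eq {n d : ℕ} {A : Matrix (Fin n) (Fin n) ℂ}
    (hA : IsTournament A) {α : ℂ} (hα : 0 < α.im) {φ : Fin n → EuclideanSpace ℂ (Fin d)}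
    (hφ : gram ℂ φ = tournamentGram A α) : IsRepresentation A α φ := by
  refine ⟨hα, fun x => ?_, fun x y hxy => ⟨fun h => ?_, fun h => ?_⟩⟩
  · have h := congrFun (congrFun hφ x) x
    rw [gram_apply, hA.tournamentGram_apply_self] at h
    have hsq := inner_self_eq_norm_sq (𝕜 := ℂ) (φ x)
    rw [h, RCLike.one_re] at hsq
    exact (pow_eq_one_iff_of_nonneg (norm_nonneg _) two_ne_zero).1 hsq.symm
  · rw [← gram_apply (𝕜 := ℂ), hφ, hA.tournamentGram_apply_of_apply_eq_one α hxy h]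
  · rw [← gram_apply (𝕜 := ℂ), hφ, hA.tournamentGram_apply_of_apply_swap_eq_one α hxy h]

theorem IsTournament.representable_of_sub_transpose_mul_self {d : ℕ} (hd : 0 < d)
    {A : Matrix (Fin (2 * d)) (Fin (2 * d)) ℂ} (hA : IsTournament A)
    (hS : (A - Aᵀ) * (A - Aᵀ) = -((Fintype.card (Fin (2 * d)) : ℂ) - 1) • 1) :
    Representable A d := by
  have hpos : (0 : ℝ) < 2 * d - 1 := by
    have : (1 : ℝ) ≤ d := by exact_mod_cast hd
    linarith
  set b : ℝ := (Real.sqrt (2 * d - 1))⁻¹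
  have hb : 0 < b := inv_pos.2 (Real.sqrt_pos.2 hpos)
  set β : ℂ := b * Complex.I
  have hG : tournamentGram A β = 1 + β • (A - Aᵀ) := by
    rw [hA.tournamentGram_eq]
    simp [β]
  have hS2 : β ^ 2 • ((A - Aᵀ) * (A - Aᵀ)) = 1 := by
    have hb2 : (b : ℂ) ^ 2 * (2 * d - 1) = 1 := by
      have : b ^ 2 * (2 * d - 1) = 1 := by
        rw [inv_pow, Real.sq_sqrt hpos.le, inv_mul_cancel₀ hpos.ne']
      exact_mod_cast this
    rw [hS, smul_smul, Fintype.card_fin, Nat.cast_mul, Nat.cast_ofNat]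
    convert one_smul ℂ (1 : Matrix (Fin (2 * d)) (Fin (2 * d)) ℂ)
    linear_combination hb2 - (b : ℂ) ^ 2 * (2 * d - 1) * Complex.I_sq
  have hSH : (A - Aᵀ)ᴴ = -(A - Aᵀ) := by
    rw [conjTranspose_sub, hA.conjTranspose_eq,
      conjTranspose_transpose_eq_transpose_conjTranspose, hA.conjTranspose_eq]
    simp
  obtain ⟨B, hB, hBB⟩ := exists_conjTranspose_mul_eq_one_add_smul (by simp) hSH (by simp [β]) hS2
  obtain ⟨φ, hφ⟩ := exists_gram_eq_conjTranspose_mul B (d := d) (by simp at hB; omega)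
  exact ⟨β, φ, hA.isRepresentation_of_gram_eq (by simpa [β] using hb)
    (hφ.trans (hBB.trans hG.symm))⟩

namespace IsRepresentation

variable {n d : ℕ} {A : Matrix (Fin n) (Fin n) ℂ} {α : ℂ} {φ : Fin n → EuclideanSpace ℂ (Fin d)}

lemma injective (hφ : IsRepresentation A α φ) (hA : IsTournament A) : Function.Injective φ := by
  intro x y hxy
  by_contra hne
  have h1 : (inner ℂ (φ x) (φ y) : ℂ) = 1 := by
    rw [hxy, inner_self_eq_norm_sq_to_K, hφ.2.1 y]
    simp
  rcases hA.apply_eq_one_or_swap hne with ⟨h, -⟩ | ⟨-, h⟩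
  · have := congrArg Complex.im ((hφ.2.2 x y hne).1 h ▸ h1)
    simp [hφ.1.ne'] at this
  · have := congrArg Complex.im ((hφ.2.2 x y hne).2 h ▸ h1)
    simp [hφ.1.ne'] at this

lemma isTwoCode_image (hφ : IsRepresentation A α φ) (hA : IsTournament A) (hn : 2 ≤ n) :
    IsTwoCode (Finset.univ.image φ) α := by
  refine ⟨hφ.1.ne', by simpa using hφ.2.1, Set.ext fun z => ⟨?_, ?_⟩⟩
  · rintro ⟨_, hx, _, hy, hne, rfl⟩
    obtain ⟨x, -, rfl⟩ := Finset.mem_image.1 hx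
    obtain ⟨y, -, rfl⟩ := Finset.mem_image.1 hy
    have hxy : x ≠ y := by rintro rfl; exact hne rfl
    rcases hA.apply_eq_one_or_swap hxy with ⟨h, -⟩ | ⟨-, h⟩
    · exact .inl ((hφ.2.2 x y hxy).1 h)
    · exact .inr ((hφ.2.2 x y hxy).2 h)
  · obtain ⟨x, y, hxy, h⟩ : ∃ x y : Fin n, x ≠ y ∧ A x y = 1 := by
      have h01 : (⟨0, by omega⟩ : Fin n) ≠ ⟨1, by omega⟩ := by simp [Fin.ext_iff]
      rcases hA.apply_eq_one_or_swap h01 with ⟨h, -⟩ | ⟨-, h⟩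
      exacts [⟨_, _, h01, h⟩, ⟨_, _, h01.symm, h⟩]
    rintro (rfl | rfl)
    · exact ⟨φ x, by simp, φ y, by simp, (hφ.injective hA).ne hxy, (hφ.2.2 x y hxy).1 h⟩
    · exact ⟨φ y, by simp, φ x, by simp, (hφ.injective hA).ne hxy.symm,
        (hφ.2.2 y x hxy.symm).2 h⟩

end IsRepresentation

namespace IsTwoCode

variable {d : ℕ} {X : Finset (EuclideanSpace ℂ (Fin d))} {α : ℂ}

lemma inner_eq_or (h : IsTwoCode X α) {x y : EuclideanSpace ℂ (Fin d)} (hx : x ∈ X) (hy : y ∈ X)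
    (hxy : x ≠ y) : (inner ℂ x y : ℂ) = α ∨ (inner ℂ x y : ℂ) = starRingEnd ℂ α := by
  have hmem : (inner ℂ x y : ℂ) ∈ {z : ℂ | ∃ x ∈ X, ∃ y ∈ X, x ≠ y ∧ (inner ℂ x y : ℂ) = z} :=
    ⟨x, hx, y, hy, hxy, rfl⟩
  rwa [h.2.2] at hmem

lemma conj_ne (h : IsTwoCode X α) : starRingEnd ℂ α ≠ α :=
  fun hα => h.1 (Complex.conj_eq_iff_im.1 hα)

lemma codeAdj_apply_of_ne (h : IsTwoCode X α) {x y : X} (hxy : x ≠ y) :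
    codeAdj X α x y = 1 ∧ codeAdj X α y x = 0 ∧ (inner ℂ (x : EuclideanSpace ℂ (Fin d)) y : ℂ) = α ∨
      codeAdj X α x y = 0 ∧ codeAdj X α y x = 1 ∧
        (inner ℂ (x : EuclideanSpace ℂ (Fin d)) y : ℂ) = starRingEnd ℂ α := by
  have hne : (x : EuclideanSpace ℂ (Fin d)) ≠ y := Subtype.coe_ne_coe.2 hxy
  have hswap : (inner ℂ (y : EuclideanSpace ℂ (Fin d)) x : ℂ) =
      starRingEnd ℂ (inner ℂ (x : EuclideanSpace ℂ (Fin d)) y) := (inner_conj_symm _ _).symm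
  rcases h.inner_eq_or x.2 y.2 hne with hα | hα
  · refine .inl ⟨if_pos ⟨hne, hα⟩, if_neg ?_, hα⟩
    rw [hswap, hα]
    exact fun h' => h.conj_ne h'.2
  · refine .inr ⟨if_neg ?_, if_pos ⟨hne.symm, by rw [hswap, hα, Complex.conj_conj]⟩, hα⟩
    exact fun h' => h.conj_ne (hα ▸ h'.2)

lemma isTournament_codeAdj (h : IsTwoCode X α) : IsTournament (codeAdj X α) := by
  refine ⟨fun x y => by rw [codeAdj, of_apply]; split_ifs <;> simp, ?_⟩
  ext x y
  rcases eq_or_ne x y with rfl | hxy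
  · simp [codeAdj]
  · rcases h.codeAdj_apply_of_ne hxy with ⟨h1, h2, -⟩ | ⟨h1, h2, -⟩ <;>
      simp [h1, h2, one_apply_ne hxy]

lemma gram_eq_tournamentGram (h : IsTwoCode X α) :
    gram ℂ (fun x : X => (x : EuclideanSpace ℂ (Fin d))) = tournamentGram (codeAdj X α) α := by
  ext x y
  rw [gram_apply]
  rcases eq_or_ne x y with rfl | hxy
  · rw [h.isTournament_codeAdj.tournamentGram_apply_self, inner_self_eq_norm_sq_to_K,
      h.2.1 x x.2]
    simp
  · rcases h.codeAdj_apply_of_ne hxy with ⟨h1, -, hα⟩ | ⟨-, h1, hα⟩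
    · rw [hα, h.isTournament_codeAdj.tournamentGram_apply_of_apply_eq_one α hxy h1]
    · rw [hα, h.isTournament_codeAdj.tournamentGram_apply_of_apply_swap_eq_one α hxy h1]

lemma re_ne_one (h : IsTwoCode X α) : α.re ≠ 1 := by
  obtain ⟨x, hx, y, hy, -, hxy⟩ : α ∈ {z : ℂ | ∃ x ∈ X, ∃ y ∈ X, x ≠ y ∧ (inner ℂ x y : ℂ) = z} :=
    h.2.2 ▸ Set.mem_insert α _
  have hle : ‖α‖ ≤ 1 := by
    simpa [← hxy, h.2.1 x hx, h.2.1 y hy] using norm_inner_le_norm (𝕜 := ℂ) x y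
  intro hre
  have := Complex.normSq_eq_norm_sq α
  rw [Complex.normSq_apply, hre] at this
  have him : 0 < α.im * α.im := mul_self_pos.2 h.1
  nlinarith [norm_nonneg α]

theorem isSkewHadamard (h : IsTwoCode X α) (hcard : X.card = 2 * d) (heven : Even d) :
    IsSkewHadamard (1 + codeAdj X α - (codeAdj X α)ᵀ) := by
  have hV : Fintype.card X = 2 * d := by rw [Fintype.card_coe, hcard]
  refine h.isTournament_codeAdj.isSkewHadamard_one_add_sub_transpose ?_
  have hrank := rank_gram_le (𝕜 := ℂ) (fun x : X => (x : EuclideanSpace ℂ (Fin d)))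
  rw [h.gram_eq_tournamentGram, finrank_euclideanSpace_fin] at hrank
  exact h.isTournament_codeAdj.sub_transpose_mul_self_eq_of_rank_le hV heven h.1 h.re_ne_one hrank

end IsTwoCode

/-- for even `d`: any 2-code in `Ω(d)` of size `2d` yields a skew Hadamard
matrix `I + A − Aᵀ`; conversely a skew Hadamard matrix `H` of order `2d` gives a tournament
`A = (H + J)/2 − I` representable in `Ω(d)`, hence a 2-code of size `2d` in `Ω(d)`. -/
theorem twoCode_tight_even_skewHadamard {d : ℕ} (hd : 0 < d) (heven : Even d) :
    (∀ (X : Finset (EuclideanSpace ℂ (Fin d))) (α : ℂ),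
      IsTwoCode X α → 0 < α.im → X.card = 2 * d →
        IsSkewHadamard ((1 : Matrix {x // x ∈ X} {x // x ∈ X} ℂ)
          + codeAdj X α - (codeAdj X α)ᵀ)) ∧
    (∀ H : Matrix (Fin (2 * d)) (Fin (2 * d)) ℂ, IsSkewHadamard H →
      Representable ((1 / 2 : ℂ) • (H + Matrix.of (fun _ _ => (1 : ℂ))) - 1) d ∧
      ∃ (X : Finset (EuclideanSpace ℂ (Fin d))) (α : ℂ),
        IsTwoCode X α ∧ X.card = 2 * d) := by
  refine ⟨fun X α hX _ hcard => hX.isSkewHadamard hcard heven, fun H hH => ?_⟩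
  have hA := hH.isTournament
  obtain ⟨α, φ, hφ⟩ := hA.representable_of_sub_transpose_mul_self hd
    (hH.sub_transpose ▸ hH.sub_one_mul_self)
  refine ⟨⟨α, φ, hφ⟩, _, α, hφ.isTwoCode_image hA (by omega), ?_⟩
  rw [Finset.card_image_of_injective _ (hφ.injective hA), Finset.card_univ, Fintype.card_fin]
end
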